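/- arXiv:1904.12432 — 4 statements merged into one kernel-verified Lean document; each statement's English description precedes it below -/
import Mathlib

section
/- Let N be a rooted binary phylogenetic X-network and let S be a subset of A(N). Then the arc-induced subgraph N[S] is a support tree of N if and only if S is an admissible arc-set of N. -/
/-- A finite simple directed graph, given by a finite vertex set and a finite
set of arcs (ordered pairs of vertices) whose endpoints lie in the vertex set. -/
structure Dgraph (V : Type*) where
  verts : Finset V
  arcs : Finset (V × V)
  tail_mem : ∀ a ∈ arcs, a.1 ∈ verts
  head_mem : ∀ a ∈ arcs, a.2 ∈ verts

namespace Dgraph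

variable {V : Type*}

/-- The in-degree of a vertex. -/
def indeg [DecidableEq V] (G : Dgraph V) (v : V) : ℕ :=
  (G.arcs.filter fun a => a.2 = v).card

/-- The out-degree of a vertex. -/
def outdeg [DecidableEq V] (G : Dgraph V) (v : V) : ℕ :=
  (G.arcs.filter fun a => a.1 = v).card

/-- A leaf is a vertex of in-degree 1 and out-degree 0. -/
def IsLeaf [DecidableEq V] (G : Dgraph V) (v : V) : Prop :=
  v ∈ G.verts ∧ G.indeg v = 1 ∧ G.outdeg v = 0

/-- A directed graph is acyclic if it has no directed cycle. -/
def Acyclic (G : Dgraph V) : Prop :=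
  ∀ v : V, ¬ Relation.TransGen (fun u w => (u, w) ∈ G.arcs) v v

def IsSubgraph (H G : Dgraph V) : Prop :=
  H.verts ⊆ G.verts ∧ H.arcs ⊆ G.arcs

/-- The subgraph induced by a set of arcs: its vertices are all endpoints of those arcs. -/
def ofArcs [DecidableEq V] (A : Finset (V × V)) : Dgraph V where
  verts := A.image Prod.fst ∪ A.image Prod.snd
  arcs := A
  tail_mem := fun a ha => Finset.mem_union_left _ (Finset.mem_image_of_mem _ ha)
  head_mem := fun a ha => Finset.mem_union_right _ (Finset.mem_image_of_mem _ ha)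

/-- A rooted binary phylogenetic `X`-network: a finite simple directed acyclic graph
with a unique root of in-degree 0 and out-degree 1 or 2, whose leaf set is the
nonempty finite set `X`, and all of whose other vertices have
`{in-degree, out-degree} = {1, 2}`. -/
def IsRBPN [DecidableEq V] (N : Dgraph V) (X : Finset V) : Prop :=
  N.Acyclic ∧ X.Nonempty ∧ X ⊆ N.verts ∧
  ∃ ρ ∈ N.verts,
    N.indeg ρ = 0 ∧ (N.outdeg ρ = 1 ∨ N.outdeg ρ = 2) ∧
    (∀ v ∈ N.verts, N.indeg v = 0 → v = ρ) ∧
    (∀ v ∈ N.verts, (N.IsLeaf v ↔ v ∈ X)) ∧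
    (∀ v ∈ N.verts, v ∉ X → v ≠ ρ →
      (N.indeg v = 1 ∧ N.outdeg v = 2) ∨ (N.indeg v = 2 ∧ N.outdeg v = 1))

/-- A rooted binary phylogenetic `X`-tree: a rooted binary phylogenetic `X`-network
with no vertex of in-degree 2. -/
def IsRBPT [DecidableEq V] (T : Dgraph V) (X : Finset V) : Prop :=
  IsRBPN T X ∧ ∀ v ∈ T.verts, T.indeg v ≠ 2

/-- `H` is obtained from `G` by inserting one new (subdividing) vertex into one arc. -/
def SubdivideArc [DecidableEq V] (G H : Dgraph V) : Prop :=
  ∃ u v w : V, (u, v) ∈ G.arcs ∧ w ∉ G.verts ∧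
    H.verts = insert w G.verts ∧
    H.arcs = insert (u, w) (insert (w, v) (G.arcs.erase (u, v)))

/-- `IsSubdivisionOf T τ` : `τ` is obtained from `T` by inserting zero or more
subdividing vertices into arcs. -/
inductive IsSubdivisionOf [DecidableEq V] : Dgraph V → Dgraph V → Prop
  | refl (G : Dgraph V) : IsSubdivisionOf G G
  | step {G H K : Dgraph V} : IsSubdivisionOf G H → SubdivideArc H K → IsSubdivisionOf G K

/-- A support tree of `N`: a spanning subgraph of `N` that can be obtained from some
rooted binary phylogenetic `X`-tree by inserting zero or more vertices into each arc. -/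
def IsSupportTree [DecidableEq V] (N : Dgraph V) (X : Finset V) (τ : Dgraph V) : Prop :=
  τ.verts = N.verts ∧ τ.arcs ⊆ N.arcs ∧
  ∃ T : Dgraph V, IsRBPT T X ∧ IsSubdivisionOf T τ

/-- `N` is tree-based if it has a support tree. -/
def IsTreeBased [DecidableEq V] (N : Dgraph V) (X : Finset V) : Prop :=
  ∃ τ : Dgraph V, IsSupportTree N X τ

/-- `S` is an admissible arc-set of `G`. -/
def IsAdmissible [DecidableEq V] (G : Dgraph V) (S : Finset (V × V)) : Prop :=
  S ⊆ G.arcs ∧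
  (∀ a ∈ G.arcs, (G.indeg a.2 = 1 ∨ G.outdeg a.1 = 1) → a ∈ S) ∧
  (∀ a₁ ∈ G.arcs, ∀ a₂ ∈ G.arcs, a₁ ≠ a₂ → a₁.2 = a₂.2 →
    ((a₁ ∈ S ∧ a₂ ∉ S) ∨ (a₁ ∉ S ∧ a₂ ∈ S))) ∧
  (∀ a₁ ∈ G.arcs, ∀ a₂ ∈ G.arcs, a₁ ≠ a₂ → a₁.1 = a₂.1 → (a₁ ∈ S ∨ a₂ ∈ S))

end Dgraph

/-!
Both sides say the same thing vertex by vertex: `S` keeps exactly one in-arc at every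
non-root vertex and at least one out-arc at every non-leaf. For admissibility this is a local
count, because every vertex of `N` has in- and out-degree at most 2. A subdivided phylogenetic
tree has in-degree 1 away from its root and out-degree 0 only at leaves, which gives one
direction. Conversely, such an `N[S]` spans `N` and is acyclic; suppressing its vertices of in-
and out-degree 1 one at a time, each suppression being undone by a `SubdivideArc`, ends in a
rooted binary phylogenetic `X`-tree.
-/

namespace Finset

variable {α : Type*} [DecidableEq α] {A S : Finset α}

lemma card_inter_eq_one_iff_of_card_le_two (hA : A.Nonempty) (hA2 : A.card ≤ 2) :
    (A ∩ S).card = 1 ↔ (A.card = 1 → A ⊆ S) ∧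
      ∀ a ∈ A, ∀ b ∈ A, a ≠ b → (a ∈ S ∧ b ∉ S ∨ a ∉ S ∧ b ∈ S) := by
  obtain h | h : A.card = 1 ∨ A.card = 2 := by have := hA.card_pos; omega
  · obtain ⟨a, rfl⟩ := card_eq_one.1 h
    by_cases ha : a ∈ S <;> simp [ha]
  · obtain ⟨a, b, hab, rfl⟩ := card_eq_two.1 h
    by_cases ha : a ∈ S <;> by_cases hb : b ∈ S <;> simp [ha, hb, hab, Ne.symm hab]

lemma inter_nonempty_iff_of_card_le_two (hA : A.Nonempty) (hA2 : A.card ≤ 2) :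
    (A ∩ S).Nonempty ↔
      (A.card = 1 → A ⊆ S) ∧ ∀ a ∈ A, ∀ b ∈ A, a ≠ b → a ∈ S ∨ b ∈ S := by
  obtain h | h : A.card = 1 ∨ A.card = 2 := by have := hA.card_pos; omega
  · obtain ⟨a, rfl⟩ := card_eq_one.1 h
    by_cases ha : a ∈ S <;> simp [ha]
  · obtain ⟨a, b, hab, rfl⟩ := card_eq_two.1 h
    by_cases ha : a ∈ S <;> by_cases hb : b ∈ S <;> simp [ha, hb, hab, Ne.symm hab]

end Finset

namespace Dgraph

variable {V : Type*}

section Basic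

variable {G : Dgraph V} {a : V × V} {v : V}

lemma fst_ne_of_notMem_verts (hv : v ∉ G.verts) (ha : a ∈ G.arcs) : a.1 ≠ v :=
  fun h => hv (h ▸ G.tail_mem a ha)

lemma snd_ne_of_notMem_verts (hv : v ∉ G.verts) (ha : a ∈ G.arcs) : a.2 ≠ v :=
  fun h => hv (h ▸ G.head_mem a ha)

lemma Acyclic.of_arcs_transGen {H : Dgraph V} (hG : G.Acyclic)
    (h : ∀ a ∈ H.arcs, Relation.TransGen (fun x y => (x, y) ∈ G.arcs) a.1 a.2) : H.Acyclic :=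
  fun x hx => hG x (Relation.TransGen.closed (fun y z hyz => h (y, z) hyz) _ _ hx)

variable [DecidableEq V]

lemma snd_ne_of_indeg_eq_zero (hv : G.indeg v = 0) (ha : a ∈ G.arcs) : a.2 ≠ v :=
  fun h => (Finset.card_pos.2 ⟨a, Finset.mem_filter.2 ⟨ha, h⟩⟩).ne' hv

lemma fst_ne_of_outdeg_eq_zero (hv : G.outdeg v = 0) (ha : a ∈ G.arcs) : a.1 ≠ v :=
  fun h => (Finset.card_pos.2 ⟨a, Finset.mem_filter.2 ⟨ha, h⟩⟩).ne' hv

lemma eq_of_indeg_eq_one {b : V × V} (hv : G.indeg v = 1) (ha : a ∈ G.arcs) (hb : b ∈ G.arcs)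
    (hav : a.2 = v) (hbv : b.2 = v) : a = b :=
  Finset.card_le_one.1 hv.le a (Finset.mem_filter.2 ⟨ha, hav⟩) b
    (Finset.mem_filter.2 ⟨hb, hbv⟩)

lemma mem_verts_of_indeg_ne_zero (hv : G.indeg v ≠ 0) : v ∈ G.verts := by
  obtain ⟨a, ha⟩ := Finset.card_ne_zero.1 hv
  exact (Finset.mem_filter.1 ha).2 ▸ G.head_mem a (Finset.mem_filter.1 ha).1

lemma mem_verts_of_outdeg_ne_zero (hv : G.outdeg v ≠ 0) : v ∈ G.verts := by
  obtain ⟨a, ha⟩ := Finset.card_ne_zero.1 hv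
  exact (Finset.mem_filter.1 ha).2 ▸ G.tail_mem a (Finset.mem_filter.1 ha).1

end Basic

variable [DecidableEq V]

section OfArcs

variable {N : Dgraph V} {S : Finset (V × V)}

lemma verts_ofArcs_subset (hS : S ⊆ N.arcs) : (ofArcs S).verts ⊆ N.verts := by
  intro x hx
  simp only [ofArcs, Finset.mem_union, Finset.mem_image] at hx
  rcases hx with ⟨a, ha, rfl⟩ | ⟨a, ha, rfl⟩
  exacts [N.tail_mem a (hS ha), N.head_mem a (hS ha)]

lemma indeg_ofArcs (hS : S ⊆ N.arcs) (v : V) :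
    (ofArcs S).indeg v = (N.arcs.filter (·.2 = v) ∩ S).card := by
  rw [Finset.filter_inter, Finset.inter_eq_right.2 hS]
  rfl

lemma outdeg_ofArcs (hS : S ⊆ N.arcs) (v : V) :
    (ofArcs S).outdeg v = (N.arcs.filter (·.1 = v) ∩ S).card := by
  rw [Finset.filter_inter, Finset.inter_eq_right.2 hS]
  rfl

lemma indeg_ofArcs_le (hS : S ⊆ N.arcs) (v : V) : (ofArcs S).indeg v ≤ N.indeg v :=
  Finset.card_le_card (Finset.filter_subset_filter _ hS)

lemma outdeg_ofArcs_le (hS : S ⊆ N.arcs) (v : V) : (ofArcs S).outdeg v ≤ N.outdeg v :=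
  Finset.card_le_card (Finset.filter_subset_filter _ hS)

lemma Acyclic.ofArcs (hN : N.Acyclic) (hS : S ⊆ N.arcs) : (ofArcs S).Acyclic :=
  hN.of_arcs_transGen fun _ ha => .single (hS ha)

end OfArcs

section Subdivide

variable {A : Finset (V × V)} {u v w x : V}

lemma card_filter_snd_subdivide (huv : (u, v) ∈ A) (hw : ∀ a ∈ A, a.1 ≠ w) (hx : x ≠ w) :
    ((insert (u, w) (insert (w, v) (A.erase (u, v)))).filter (·.2 = x)).card =
      (A.filter (·.2 = x)).card := by
  have hwv : (w, v) ∉ A.erase (u, v) := fun h => hw _ (Finset.mem_of_mem_erase h) rfl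
  rw [Finset.filter_insert, if_neg (Ne.symm hx), Finset.filter_insert, Finset.filter_erase]
  split_ifs with hvx
  · subst hvx
    rw [Finset.card_insert_of_notMem (by simpa using hwv),
      Finset.card_erase_add_one (by simpa using huv)]
  · rw [Finset.erase_eq_of_notMem (by simp [hvx])]

lemma card_filter_fst_subdivide (huv : (u, v) ∈ A) (hw : ∀ a ∈ A, a.2 ≠ w) (hx : x ≠ w) :
    ((insert (u, w) (insert (w, v) (A.erase (u, v)))).filter (·.1 = x)).card =
      (A.filter (·.1 = x)).card := by
  have huw : (u, w) ∉ A.erase (u, v) := fun h => hw _ (Finset.mem_of_mem_erase h) rfl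
  rw [Finset.filter_insert, Finset.filter_insert, if_neg (Ne.symm hx), Finset.filter_erase]
  split_ifs with hux
  · subst hux
    rw [Finset.card_insert_of_notMem (by simpa using huw),
      Finset.card_erase_add_one (by simpa using huv)]
  · rw [Finset.erase_eq_of_notMem (by simp [hux])]

lemma card_filter_snd_subdivide_self (hw : ∀ a ∈ A, a.2 ≠ w) (hvw : v ≠ w) :
    ((insert (u, w) (insert (w, v) (A.erase (u, v)))).filter (·.2 = w)).card = 1 :=
  Finset.card_eq_one.2 ⟨(u, w), by ext; simp; grind⟩

lemma card_filter_fst_subdivide_self (hw : ∀ a ∈ A, a.1 ≠ w) (huw : u ≠ w) :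
    ((insert (u, w) (insert (w, v) (A.erase (u, v)))).filter (·.1 = w)).card = 1 :=
  Finset.card_eq_one.2 ⟨(w, v), by ext; simp; grind⟩

variable {G H : Dgraph V} (huv : (u, v) ∈ G.arcs) (hw : w ∉ G.verts)
  (hH : H.arcs = insert (u, w) (insert (w, v) (G.arcs.erase (u, v))))
include huv hw hH

lemma indeg_subdivide (hx : x ≠ w) : H.indeg x = G.indeg x := by
  rw [indeg, hH]
  exact card_filter_snd_subdivide huv (fun _ => fst_ne_of_notMem_verts hw) hx

lemma outdeg_subdivide (hx : x ≠ w) : H.outdeg x = G.outdeg x := by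
  rw [outdeg, hH]
  exact card_filter_fst_subdivide huv (fun _ => snd_ne_of_notMem_verts hw) hx

lemma indeg_subdivide_self : H.indeg w = 1 := by
  rw [indeg, hH]
  exact card_filter_snd_subdivide_self (fun _ => snd_ne_of_notMem_verts hw)
    (snd_ne_of_notMem_verts hw huv)

lemma outdeg_subdivide_self : H.outdeg w = 1 := by
  rw [outdeg, hH]
  exact card_filter_fst_subdivide_self (fun _ => fst_ne_of_notMem_verts hw)
    (fst_ne_of_notMem_verts hw huv)

end Subdivide

section Subdivision

variable {X : Finset V} {T G : Dgraph V}

lemma IsSubdivisionOf.exists_root (hT : IsRBPT T X) (h : IsSubdivisionOf T G) :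
    ∃ r, (∀ x ∈ G.verts, x ≠ r → G.indeg x = 1) ∧
      ∀ x ∈ G.verts, x ∉ X → G.outdeg x ≠ 0 := by
  induction h with
  | refl =>
    obtain ⟨⟨-, -, -, ρ, -, -, hρout, -, hleaf, hint⟩, hdeg2⟩ := hT
    refine ⟨ρ, fun x hx hxρ => ?_, fun x hx hxX => ?_⟩
    · by_cases hxX : x ∈ X
      · exact ((hleaf x hx).2 hxX).2.1
      · have := hdeg2 x hx
        rcases hint x hx hxX hxρ with h | h <;> omega
    · by_cases hxρ : x = ρ
      · subst hxρ; omega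
      · rcases hint x hx hxX hxρ with h | h <;> omega
  | step _ hstep ih =>
    obtain ⟨u, v, w, huv, hw, hverts, harcs⟩ := hstep
    obtain ⟨r, hin, hout⟩ := ih
    refine ⟨r, fun x hx hxr => ?_, fun x hx hxX => ?_⟩ <;>
      rcases Finset.mem_insert.1 (hverts ▸ hx) with rfl | hx
    · exact indeg_subdivide_self huv hw harcs
    · rw [indeg_subdivide huv hw harcs (ne_of_mem_of_not_mem hx hw)]
      exact hin x hx hxr
    · simp [outdeg_subdivide_self huv hw harcs]
    · rw [outdeg_subdivide huv hw harcs (ne_of_mem_of_not_mem hx hw)]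
      exact hout x hx hxX

end Subdivision

section Suppress

variable {G : Dgraph V} {u v w : V}

lemma exists_filter_snd_eq_singleton (h : G.indeg w = 1) :
    ∃ u, G.arcs.filter (·.2 = w) = {(u, w)} := by
  obtain ⟨p, hp⟩ := Finset.card_eq_one.1 h
  have hpw : p ∈ G.arcs.filter (·.2 = w) := hp ▸ Finset.mem_singleton_self p
  obtain rfl := (Finset.mem_filter.1 hpw).2
  exact ⟨p.1, hp⟩

lemma exists_filter_fst_eq_singleton (h : G.outdeg w = 1) :
    ∃ v, G.arcs.filter (·.1 = w) = {(w, v)} := by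
  obtain ⟨p, hp⟩ := Finset.card_eq_one.1 h
  have hpw : p ∈ G.arcs.filter (·.1 = w) := hp ▸ Finset.mem_singleton_self p
  obtain rfl := (Finset.mem_filter.1 hpw).2
  exact ⟨p.2, hp⟩

lemma exists_suppress (hin : G.arcs.filter (·.2 = w) = {(u, w)})
    (hout : G.arcs.filter (·.1 = w) = {(w, v)}) (hu : u ≠ w) (hv : v ≠ w) :
    ∃ G' : Dgraph V, G'.verts = G.verts.erase w ∧
      G'.arcs = insert (u, v) ((G.arcs.erase (u, w)).erase (w, v)) := by
  have hin' := Finset.ext_iff.1 hin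
  have hout' := Finset.ext_iff.1 hout
  simp only [Finset.mem_filter, Finset.mem_singleton] at hin' hout'
  refine ⟨⟨G.verts.erase w, insert (u, v) ((G.arcs.erase (u, w)).erase (w, v)), ?_, ?_⟩,
    rfl, rfl⟩
  · intro a ha
    simp only [Finset.mem_insert, Finset.mem_erase] at ha ⊢
    rcases ha with rfl | ⟨hav, -, ha⟩
    · exact ⟨hu, G.tail_mem (u, w) ((hin' (u, w)).2 rfl).1⟩
    · exact ⟨fun h => hav ((hout' a).1 ⟨ha, h⟩), G.tail_mem a ha⟩
  · intro a ha
    simp only [Finset.mem_insert, Finset.mem_erase] at ha ⊢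
    rcases ha with rfl | ⟨-, hau, ha⟩
    · exact ⟨hv, G.head_mem (w, v) ((hout' (w, v)).2 rfl).1⟩
    · exact ⟨fun h => hau ((hin' a).1 ⟨ha, h⟩), G.head_mem a ha⟩

end Suppress

/-- Described by degrees: the subdividing vertices are those of in- and out-degree 1. -/
structure IsSubdividedRBPT (X : Finset V) (ρ : V) (G : Dgraph V) : Prop where
  acyclic : G.Acyclic
  nonempty : X.Nonempty
  subset_verts : X ⊆ G.verts
  root_mem : ρ ∈ G.verts
  root_notMem : ρ ∉ X
  indeg_root : G.indeg ρ = 0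
  indeg_of_ne_root : ∀ x ∈ G.verts, x ≠ ρ → G.indeg x = 1
  outdeg_of_mem : ∀ x ∈ X, G.outdeg x = 0
  outdeg_of_notMem : ∀ x ∈ G.verts, x ∉ X → G.outdeg x = 1 ∨ G.outdeg x = 2

namespace IsSubdividedRBPT

variable {X : Finset V} {ρ w : V} {G : Dgraph V}

lemma isRBPT (hG : IsSubdividedRBPT X ρ G)
    (h : ∀ x ∈ G.verts, G.indeg x = 1 → G.outdeg x ≠ 1) : IsRBPT G X := by
  have hindeg : ∀ x ∈ G.verts, x ∈ X → G.indeg x = 1 := fun x hx hxX =>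
    hG.indeg_of_ne_root x hx (ne_of_mem_of_not_mem hxX hG.root_notMem)
  refine ⟨⟨hG.acyclic, hG.nonempty, hG.subset_verts, ρ, hG.root_mem, hG.indeg_root,
    hG.outdeg_of_notMem ρ hG.root_mem hG.root_notMem, fun x hx hx0 => ?_,
    fun x hx => ⟨?_, fun hxX => ⟨hx, hindeg x hx hxX, hG.outdeg_of_mem x hxX⟩⟩,
    fun x hx hxX hxρ => ?_⟩, fun x hx => ?_⟩
  · by_contra hxρ
    have := hG.indeg_of_ne_root x hx hxρ
    omega
  · rintro ⟨-, hin, hout⟩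
    by_contra hxX
    have := hG.outdeg_of_notMem x hx hxX
    omega
  · have hin := hG.indeg_of_ne_root x hx hxρ
    have := h x hx hin
    have := hG.outdeg_of_notMem x hx hxX
    omega
  · by_cases hxρ : x = ρ
    · rw [hxρ, hG.indeg_root]; omega
    · rw [hG.indeg_of_ne_root x hx hxρ]; omega

lemma exists_subdivideArc (hG : IsSubdividedRBPT X ρ G) (hw : w ∈ G.verts)
    (hin : G.indeg w = 1) (hout : G.outdeg w = 1) :
    ∃ G', IsSubdividedRBPT X ρ G' ∧ SubdivideArc G' G ∧ G'.verts.card < G.verts.card := by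
  obtain ⟨u, hu⟩ := exists_filter_snd_eq_singleton hin
  obtain ⟨v, hv⟩ := exists_filter_fst_eq_singleton hout
  have huw_mem : (u, w) ∈ G.arcs := (Finset.mem_filter.1 (hu ▸ Finset.mem_singleton_self _)).1
  have hwv_mem : (w, v) ∈ G.arcs := (Finset.mem_filter.1 (hv ▸ Finset.mem_singleton_self _)).1
  have huw : u ≠ w := fun h => hG.acyclic u (.single (h ▸ huw_mem))
  have hvw : v ≠ w := fun h => hG.acyclic w (.single (h ▸ hwv_mem))
  have hv1 : G.indeg v = 1 := hG.indeg_of_ne_root v (G.head_mem _ hwv_mem)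
    (snd_ne_of_indeg_eq_zero hG.indeg_root hwv_mem)
  have huv : (u, v) ∉ G.arcs := fun h =>
    huw (congrArg Prod.fst (eq_of_indeg_eq_one hv1 h hwv_mem rfl rfl))
  obtain ⟨G', hverts, harcs⟩ := exists_suppress hu hv huw hvw
  have hwG' : w ∉ G'.verts := hverts ▸ Finset.notMem_erase w _
  have huvG' : (u, v) ∈ G'.arcs := harcs ▸ Finset.mem_insert_self _ _
  have hGarcs : G.arcs = insert (u, w) (insert (w, v) (G'.arcs.erase (u, v))) := by
    rw [harcs]; ext; simp; grind
  have hmem {x} : x ∈ G'.verts ↔ x ≠ w ∧ x ∈ G.verts := by rw [hverts, Finset.mem_erase]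
  have hindeg {x} (hx : x ≠ w) : G'.indeg x = G.indeg x :=
    (indeg_subdivide huvG' hwG' hGarcs hx).symm
  have houtdeg {x} (hx : x ≠ w) : G'.outdeg x = G.outdeg x :=
    (outdeg_subdivide huvG' hwG' hGarcs hx).symm
  have hXw {x} (hx : x ∈ X) : x ≠ w := by
    rintro rfl; have := hG.outdeg_of_mem x hx; omega
  have hρw : ρ ≠ w := by rintro rfl; have := hG.indeg_root; omega
  refine ⟨G', ⟨?_, hG.nonempty, fun x hx => hmem.2 ⟨hXw hx, hG.subset_verts hx⟩,
    hmem.2 ⟨hρw, hG.root_mem⟩, hG.root_notMem, hindeg hρw ▸ hG.indeg_root, ?_, ?_, ?_⟩,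
    ⟨u, v, w, huvG', hwG', by rw [hverts, Finset.insert_erase hw], hGarcs⟩,
    hverts ▸ Finset.card_erase_lt_of_mem hw⟩
  · refine hG.acyclic.of_arcs_transGen fun a ha => ?_
    rw [harcs, Finset.mem_insert] at ha
    rcases ha with rfl | ha
    · exact .head huw_mem (.single hwv_mem)
    · exact .single (Finset.mem_of_mem_erase (Finset.mem_of_mem_erase ha))
  · intro x hx hxρ
    rw [hindeg (hmem.1 hx).1]
    exact hG.indeg_of_ne_root x (hmem.1 hx).2 hxρ
  · intro x hx
    rw [houtdeg (hXw hx)]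
    exact hG.outdeg_of_mem x hx
  · intro x hx hxX
    rw [houtdeg (hmem.1 hx).1]
    exact hG.outdeg_of_notMem x (hmem.1 hx).2 hxX

theorem exists_isRBPT_isSubdivisionOf (hG : IsSubdividedRBPT X ρ G) :
    ∃ T, IsRBPT T X ∧ IsSubdivisionOf T G := by
  induction hn : G.verts.card using Nat.strong_induction_on generalizing G with
  | _ n ih =>
    by_cases h : ∃ w ∈ G.verts, G.indeg w = 1 ∧ G.outdeg w = 1
    · obtain ⟨w, hw, hin, hout⟩ := h
      obtain ⟨G', hG', hsub, hcard⟩ := hG.exists_subdivideArc hw hin hout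
      obtain ⟨T, hT, hTG'⟩ := ih _ (hn ▸ hcard) hG' rfl
      exact ⟨T, hT, hTG'.step hsub⟩
    · push Not at h
      exact ⟨G, hG.isRBPT h, .refl G⟩

end IsSubdividedRBPT

structure HasBinaryDegrees (N : Dgraph V) (X : Finset V) (ρ : V) : Prop where
  root_mem : ρ ∈ N.verts
  root_notMem : ρ ∉ X
  indeg_root : N.indeg ρ = 0
  indeg_of_ne_root : ∀ v ∈ N.verts, v ≠ ρ → N.indeg v = 1 ∨ N.indeg v = 2
  outdeg_of_mem : ∀ v ∈ X, N.outdeg v = 0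
  outdeg_of_notMem : ∀ v ∈ N.verts, v ∉ X → N.outdeg v = 1 ∨ N.outdeg v = 2

variable {N : Dgraph V} {X : Finset V} {ρ : V} {S : Finset (V × V)}

lemma IsRBPN.exists_hasBinaryDegrees (hN : IsRBPN N X) : ∃ ρ, N.HasBinaryDegrees X ρ := by
  obtain ⟨-, -, hXN, ρ, hρ, hρin, hρout, -, hleaf, hint⟩ := hN
  have hρX : ρ ∉ X := fun h => by have := ((hleaf ρ hρ).2 h).2.1; omega
  refine ⟨ρ, hρ, hρX, hρin, fun v hv hvρ => ?_, fun v hv => ((hleaf v (hXN hv)).2 hv).2.2,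
    fun v hv hvX => ?_⟩
  · by_cases hvX : v ∈ X
    · exact .inl ((hleaf v hv).2 hvX).2.1
    · rcases hint v hv hvX hvρ with h | h <;> simp [h]
  · by_cases hvρ : v = ρ
    · exact hvρ ▸ hρout
    · rcases hint v hv hvX hvρ with h | h <;> simp [h]

def IsBranchingArcSet (N : Dgraph V) (X : Finset V) (ρ : V) (S : Finset (V × V)) : Prop :=
  (∀ v ∈ N.verts, v ≠ ρ → (ofArcs S).indeg v = 1) ∧
    ∀ v ∈ N.verts, v ∉ X → (ofArcs S).outdeg v ≠ 0

lemma isAdmissible_iff (hN : N.HasBinaryDegrees X ρ) (hS : S ⊆ N.arcs) :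
    N.IsAdmissible S ↔ N.IsBranchingArcSet X ρ S := by
  have hin {v} (hv : v ∈ N.verts) (hvρ : v ≠ ρ) :=
    have hd := hN.indeg_of_ne_root v hv hvρ
    Finset.card_inter_eq_one_iff_of_card_le_two (S := S) (A := N.arcs.filter (·.2 = v))
      (Finset.card_pos.1 (by unfold indeg at hd; omega)) (by unfold indeg at hd; omega)
  have hout {v} (hv : v ∈ N.verts) (hvX : v ∉ X) :=
    have hd := hN.outdeg_of_notMem v hv hvX
    Finset.inter_nonempty_iff_of_card_le_two (S := S) (A := N.arcs.filter (·.1 = v))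
      (Finset.card_pos.1 (by unfold outdeg at hd; omega)) (by unfold outdeg at hd; omega)
  have hheadρ {a} (ha : a ∈ N.arcs) : a.2 ≠ ρ := snd_ne_of_indeg_eq_zero hN.indeg_root ha
  have htailX {a} (ha : a ∈ N.arcs) : a.1 ∉ X := fun h =>
    fst_ne_of_outdeg_eq_zero (hN.outdeg_of_mem _ h) ha rfl
  simp only [IsAdmissible, IsBranchingArcSet, indeg_ofArcs hS, outdeg_ofArcs hS,
    Finset.card_ne_zero]
  constructor
  · rintro ⟨-, hforced, hhead, htail⟩
    refine ⟨fun v hv hvρ => (hin hv hvρ).2 ⟨fun h1 a ha => ?_, fun a ha b hb hab => ?_⟩,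
      fun v hv hvX => (hout hv hvX).2 ⟨fun h1 a ha => ?_, fun a ha b hb hab => ?_⟩⟩
    all_goals rw [Finset.mem_filter] at ha
    · exact hforced a ha.1 (.inl (ha.2 ▸ h1))
    · obtain ⟨hb, hba⟩ := Finset.mem_filter.1 hb
      exact hhead a ha.1 b hb hab (ha.2.trans hba.symm)
    · exact hforced a ha.1 (.inr (ha.2 ▸ h1))
    · obtain ⟨hb, hba⟩ := Finset.mem_filter.1 hb
      exact htail a ha.1 b hb hab (ha.2.trans hba.symm)
  · rintro ⟨hin1, hout1⟩
    have hinS {a} (ha : a ∈ N.arcs) :=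
      (hin (N.head_mem a ha) (hheadρ ha)).1 (hin1 _ (N.head_mem a ha) (hheadρ ha))
    have houtS {a} (ha : a ∈ N.arcs) :=
      (hout (N.tail_mem a ha) (htailX ha)).1 (hout1 _ (N.tail_mem a ha) (htailX ha))
    refine ⟨hS, fun a ha h1 => ?_, fun a₁ h₁ a₂ h₂ hne hhead => ?_,
      fun a₁ h₁ a₂ h₂ hne htail => ?_⟩
    · exact h1.elim ((hinS ha).1 · (Finset.mem_filter.2 ⟨ha, rfl⟩))
        ((houtS ha).1 · (Finset.mem_filter.2 ⟨ha, rfl⟩))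
    · exact (hinS h₁).2 a₁ (Finset.mem_filter.2 ⟨h₁, rfl⟩) a₂
        (Finset.mem_filter.2 ⟨h₂, hhead.symm⟩) hne
    · exact (houtS h₁).2 a₁ (Finset.mem_filter.2 ⟨h₁, rfl⟩) a₂
        (Finset.mem_filter.2 ⟨h₂, htail.symm⟩) hne

lemma IsSupportTree.isBranchingArcSet (hρ : ρ ∈ N.verts) (hρin : N.indeg ρ = 0)
    (hS : S ⊆ N.arcs) (h : N.IsSupportTree X (ofArcs S)) : N.IsBranchingArcSet X ρ S := by
  obtain ⟨hV, -, T, hT, hTS⟩ := h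
  obtain ⟨r, hin, hout⟩ := hTS.exists_root hT
  rw [hV] at hin hout
  have hρr : ρ = r := by
    by_contra hρr
    have := hin ρ hρ hρr
    have := indeg_ofArcs_le hS ρ
    omega
  exact ⟨fun v hv hvρ => hin v hv (hρr ▸ hvρ), hout⟩

lemma IsBranchingArcSet.isSupportTree (hac : N.Acyclic) (hX : X.Nonempty) (hXN : X ⊆ N.verts)
    (hN : N.HasBinaryDegrees X ρ) (hS : S ⊆ N.arcs) (h : N.IsBranchingArcSet X ρ S) :
    N.IsSupportTree X (ofArcs S) := by
  have hV : (ofArcs S).verts = N.verts := by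
    refine (verts_ofArcs_subset hS).antisymm fun v hv => ?_
    by_cases hvρ : v = ρ
    · exact mem_verts_of_outdeg_ne_zero (h.2 v hv (hvρ ▸ hN.root_notMem))
    · exact mem_verts_of_indeg_ne_zero (by rw [h.1 v hv hvρ]; exact one_ne_zero)
  have hsub : IsSubdividedRBPT X ρ (ofArcs S) :=
    { acyclic := hac.ofArcs hS
      nonempty := hX
      subset_verts := hV ▸ hXN
      root_mem := hV ▸ hN.root_mem
      root_notMem := hN.root_notMem
      indeg_root := Nat.eq_zero_of_le_zero (hN.indeg_root ▸ indeg_ofArcs_le hS ρ)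
      indeg_of_ne_root := fun x hx => h.1 x (hV ▸ hx)
      outdeg_of_mem := fun x hx =>
        Nat.eq_zero_of_le_zero (hN.outdeg_of_mem x hx ▸ outdeg_ofArcs_le hS x)
      outdeg_of_notMem := fun x hx hxX => by
        have := h.2 x (hV ▸ hx) hxX
        have := outdeg_ofArcs_le hS x
        have := hN.outdeg_of_notMem x (hV ▸ hx) hxX
        omega }
  obtain ⟨T, hT, hTS⟩ := hsub.exists_isRBPT_isSubdivisionOf
  exact ⟨hV, hS, T, hT, hTS⟩

end Dgraph

/-- Let `N` be a rooted binary phylogenetic `X`-network and `S ⊆ A(N)`.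
Then the arc-induced subgraph `N[S]` is a support tree of `N` iff `S` is an admissible
arc-set of `N`. -/
theorem stmt0 {V : Type*} [DecidableEq V] (N : Dgraph V) (X : Finset V)
    (hN : Dgraph.IsRBPN N X) (S : Finset (V × V)) (hS : S ⊆ N.arcs) :
    Dgraph.IsSupportTree N X (Dgraph.ofArcs S) ↔ Dgraph.IsAdmissible N S := by
  obtain ⟨ρ, hρ⟩ := hN.exists_hasBinaryDegrees
  rw [Dgraph.isAdmissible_iff hρ hS]
  exact ⟨fun h => h.isBranchingArcSet hρ.root_mem hρ.indeg_root hS,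
    fun h => h.isSupportTree hN.1 hN.2.1 hN.2.2.1 hρ hS⟩
end

section
/- Let N be a tree-based rooted binary phylogenetic X-network. Then the arc sets of the maximal zig-zag trails of N partition A(N); that is, every arc of N belongs to exactly one maximal zig-zag trail, so N is uniquely decomposed into its maximal zig-zag trails Z_1, …, Z_d. -/
namespace Dgraph

variable {V : Type*}

/-- `Z` is (the arc set of) a zig-zag trail in `N`: a nonempty set of arcs of `N`
admitting an ordering in which any two consecutive arcs share a head or share a tail
(the corresponding subgraph is the one induced by these arcs). -/
def IsZigzag [DecidableEq V] (N : Dgraph V) (Z : Finset (V × V)) : Prop :=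
  Z ⊆ N.arcs ∧ ∃ l : List (V × V), l ≠ [] ∧ l.Nodup ∧ l.toFinset = Z ∧
    l.Chain' fun a b => a.2 = b.2 ∨ a.1 = b.1

/-- A maximal zig-zag trail of `N`: one that is not a proper subgraph of another
zig-zag trail in `N`. -/
def IsMaxZigzag [DecidableEq V] (N : Dgraph V) (Z : Finset (V × V)) : Prop :=
  IsZigzag N Z ∧ ∀ Z' : Finset (V × V), IsZigzag N Z' → Z ⊆ Z' → Z' = Z

end Dgraph

/-! In a rooted binary phylogenetic network every vertex has in- and out-degree at most two, so
every arc shares its head with at most one other arc and its tail with at most one other arc.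
In the graph on arcs given by "share a head or a tail" every vertex therefore has degree at most
two, so each of its connected components is a path or a cycle and can be traversed by a trail.
These components are thus zig-zag trails; as every zig-zag trail lies inside one component, the
components are exactly the maximal zig-zag trails. -/

def DegreeLeTwo {α : Type*} (r : α → α → Prop) : Prop :=
  ∀ c p q s, r c p → r c q → r c s → p ≠ c → q ≠ c → s ≠ c → p = q ∨ p = s ∨ q = s

section DegreeLeTwo

variable {α : Type*} {r : α → α → Prop}

theorem List.IsChain.reflTransGen_of_mem [Std.Symm r] {l : List α} (hl : l.IsChain r)
    {x y : α} (hx : x ∈ l) (hy : y ∈ l) : Relation.ReflTransGen r x y := by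
  have hne : l ≠ [] := List.ne_nil_of_mem hx
  have hhead : ∀ z ∈ l, Relation.ReflTransGen r (l.head hne) z :=
    hl.induction _ l (fun _ _ h hz => hz.tail h) fun _ => .refl
  exact (Std.Symm.symm _ _ (hhead x hx)).trans (hhead y hy)

/-- With degree at most two, `c` cannot be an interior vertex of the trail, so the trail can be
extended by `b` at one of its ends. -/
theorem List.exists_perm_cons_isChain [Std.Symm r] (hdeg : DegreeLeTwo r) {l : List α}
    (hnd : l.Nodup) (hl : l.IsChain r) {b c : α} (hc : c ∈ l) (hb : b ∉ l) (hcb : r c b) :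
    ∃ l' : List α, l'.Perm (b :: l) ∧ l'.IsChain r := by
  obtain ⟨s, t, rfl⟩ := List.append_of_mem hc
  rcases t with _ | ⟨d, t⟩
  · exact ⟨s ++ [c] ++ [b], List.perm_append_singleton _ _,
      hl.append (.singleton b) (by simp [hcb])⟩
  rcases List.eq_nil_or_concat s with rfl | ⟨s, p, rfl⟩
  · exact ⟨b :: c :: d :: t, .refl _, hl.cons_cons (Std.Symm.symm _ _ hcb)⟩
  exfalso
  simp only [List.concat_eq_append, List.append_assoc, List.singleton_append] at hl hnd hb
  have hpc : r p c := (List.isChain_append_cons_cons.mp hl).2.1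
  have hcd : r c d := List.rel_of_isChain_cons_cons (List.isChain_append_cons_cons.mp hl).2.2
  have hpcd : [p, c, d].Nodup := hnd.sublist (by simp)
  have := hdeg c p d b (Std.Symm.symm _ _ hpc) hcd hcb
  grind

/-- A longest trail through `a` inside the component of `a` cannot be extended, so it covers the
whole component. -/
theorem exists_nodup_isChain_mem_iff_reflTransGen [Std.Symm r] (hdeg : DegreeLeTwo r)
    (S : Finset α) {a : α} (hS : ∀ x, Relation.ReflTransGen r a x → x ∈ S) :
    ∃ l : List α, l.Nodup ∧ l.IsChain r ∧ ∀ x, x ∈ l ↔ Relation.ReflTransGen r a x := by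
  classical
  set P : List α → Prop :=
    fun l => l.Nodup ∧ l.IsChain r ∧ a ∈ l ∧ ∀ x ∈ l, Relation.ReflTransGen r a x
  have hbdd : ∀ l, P l → l.length ≤ S.card := fun l hl => by
    rw [← List.toFinset_card_of_nodup hl.1]
    exact Finset.card_le_card fun x hx => hS x (hl.2.2.2 x (List.mem_toFinset.mp hx))
  obtain ⟨l, hPl, hmax⟩ : ∃ l, P l ∧ ∀ l', P l' → l'.length ≤ l.length := by
    have hPa : P [a] := ⟨List.nodup_singleton a, .singleton a, List.mem_singleton_self a,
      fun _ hx => List.mem_singleton.mp hx ▸ .refl⟩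
    have hne : {n | ∃ l, P l ∧ l.length = n}.Nonempty := ⟨1, [a], hPa, rfl⟩
    have hbdd' : BddAbove {n | ∃ l, P l ∧ l.length = n} :=
      ⟨S.card, fun n ⟨l, hl, hln⟩ => hln ▸ hbdd l hl⟩
    obtain ⟨l, hl, hln⟩ := Nat.sSup_mem hne hbdd'
    exact ⟨l, hl, fun l' hl' => hln ▸ le_csSup hbdd' ⟨l', hl', rfl⟩⟩
  obtain ⟨hnd, hchain, hal, hreach⟩ := hPl
  have hclosed : ∀ c ∈ l, ∀ b, r c b → b ∈ l := by
    intro c hc b hcb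
    by_contra hb
    obtain ⟨l', hperm, hl'⟩ := List.exists_perm_cons_isChain hdeg hnd hchain hc hb hcb
    have hPl' : P l' := by
      refine ⟨hperm.nodup_iff.mpr (List.nodup_cons.mpr ⟨hb, hnd⟩), hl',
        hperm.mem_iff.mpr (List.mem_cons_of_mem b hal), fun x hx => ?_⟩
      rcases List.mem_cons.mp (hperm.mem_iff.mp hx) with rfl | hx
      · exact (hreach c hc).tail hcb
      · exact hreach x hx
    have := hmax l' hPl'
    simp [hperm.length_eq] at this
  refine ⟨l, hnd, hchain, fun x => ⟨hreach x, fun hx => ?_⟩⟩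
  induction hx with
  | refl => exact hal
  | tail _ hcb ih => exact hclosed _ ih _ hcb

end DegreeLeTwo

namespace Dgraph

variable {V : Type*} (N : Dgraph V)

def ArcAdj (x y : V × V) : Prop :=
  x ∈ N.arcs ∧ y ∈ N.arcs ∧ (x.2 = y.2 ∨ x.1 = y.1)

instance : Std.Symm N.ArcAdj :=
  ⟨fun _ _ ⟨hx, hy, h⟩ => ⟨hy, hx, h.imp Eq.symm Eq.symm⟩⟩

open Classical in
noncomputable def arcComponent (a : V × V) : Finset (V × V) :=
  N.arcs.filter (Relation.ReflTransGen N.ArcAdj a)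

theorem mem_arcComponent {a x : V × V} (ha : a ∈ N.arcs) :
    x ∈ N.arcComponent a ↔ Relation.ReflTransGen N.ArcAdj a x := by
  classical
  refine ⟨fun hx => (Finset.mem_filter.mp hx).2, fun hx => Finset.mem_filter.mpr ⟨?_, hx⟩⟩
  rcases hx.cases_tail with rfl | ⟨_, _, hcx⟩
  exacts [ha, hcx.2.1]

theorem mem_arcComponent_self {a : V × V} (ha : a ∈ N.arcs) : a ∈ N.arcComponent a :=
  (N.mem_arcComponent ha).mpr .refl

theorem arcComponent_subset (a : V × V) : N.arcComponent a ⊆ N.arcs := by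
  classical
  exact Finset.filter_subset _ _

variable {N} [DecidableEq V]

theorem IsRBPN.indeg_le_two_and_outdeg_le_two {X : Finset V} (hN : N.IsRBPN X) {v : V}
    (hv : v ∈ N.verts) : N.indeg v ≤ 2 ∧ N.outdeg v ≤ 2 := by
  obtain ⟨-, -, -, ρ, -, hρin, hρout, -, hleaf, hint⟩ := hN
  by_cases hvX : v ∈ X
  · have := ((hleaf v hv).mpr hvX).2; omega
  by_cases hvρ : v = ρ
  · subst hvρ; omega
  rcases hint v hv hvX hvρ with h | h <;> omega

theorem eq_or_eq_or_eq_of_snd_eq {v : V} (hv : N.indeg v ≤ 2) {x y z : V × V}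
    (hx : x ∈ N.arcs) (hy : y ∈ N.arcs) (hz : z ∈ N.arcs)
    (hxv : x.2 = v) (hyv : y.2 = v) (hzv : z.2 = v) : x = y ∨ x = z ∨ y = z := by
  by_contra! h
  have : 2 < N.indeg v := Finset.two_lt_card.mpr
    ⟨x, by simp [hx, hxv], y, by simp [hy, hyv], z, by simp [hz, hzv], h⟩
  omega

theorem eq_or_eq_or_eq_of_fst_eq {v : V} (hv : N.outdeg v ≤ 2) {x y z : V × V}
    (hx : x ∈ N.arcs) (hy : y ∈ N.arcs) (hz : z ∈ N.arcs)
    (hxv : x.1 = v) (hyv : y.1 = v) (hzv : z.1 = v) : x = y ∨ x = z ∨ y = z := by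
  by_contra! h
  have : 2 < N.outdeg v := Finset.two_lt_card.mpr
    ⟨x, by simp [hx, hxv], y, by simp [hy, hyv], z, by simp [hz, hzv], h⟩
  omega

/-- Among three arcs adjacent to `c`, two share the head of `c` or two share its tail. -/
theorem degreeLeTwo_arcAdj (hin : ∀ v ∈ N.verts, N.indeg v ≤ 2)
    (hout : ∀ v ∈ N.verts, N.outdeg v ≤ 2) : DegreeLeTwo N.ArcAdj := by
  rintro c p q s ⟨hc, hp, hcp⟩ ⟨-, hq, hcq⟩ ⟨-, hs, hcs⟩ hpc hqc hsc
  have head : ∀ x ∈ N.arcs, ∀ y ∈ N.arcs, c.2 = x.2 → c.2 = y.2 → c = x ∨ c = y ∨ x = y :=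
    fun _ hx _ hy hcx hcy =>
      eq_or_eq_or_eq_of_snd_eq (hin _ (N.head_mem c hc)) hc hx hy rfl hcx.symm hcy.symm
  have tail : ∀ x ∈ N.arcs, ∀ y ∈ N.arcs, c.1 = x.1 → c.1 = y.1 → c = x ∨ c = y ∨ x = y :=
    fun _ hx _ hy hcx hcy =>
      eq_or_eq_or_eq_of_fst_eq (hout _ (N.tail_mem c hc)) hc hx hy rfl hcx.symm hcy.symm
  rcases hcp with hcp | hcp <;> rcases hcq with hcq | hcq <;> rcases hcs with hcs | hcs
  all_goals grind

theorem IsZigzag.subset_arcComponent {Z : Finset (V × V)} (hZ : N.IsZigzag Z) {a : V × V}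
    (ha : a ∈ Z) : Z ⊆ N.arcComponent a := by
  obtain ⟨hZN, l, -, -, rfl, hl⟩ := hZ
  have hadj : l.IsChain N.ArcAdj := (List.IsChain.iff_mem.mp hl).imp
    fun x y ⟨hx, hy, h⟩ => ⟨hZN (List.mem_toFinset.mpr hx), hZN (List.mem_toFinset.mpr hy), h⟩
  intro x hx
  exact (N.mem_arcComponent (hZN ha)).mpr
    (hadj.reflTransGen_of_mem (List.mem_toFinset.mp ha) (List.mem_toFinset.mp hx))

theorem isZigzag_arcComponent (hdeg : DegreeLeTwo N.ArcAdj) {a : V × V} (ha : a ∈ N.arcs) :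
    N.IsZigzag (N.arcComponent a) := by
  obtain ⟨l, hnd, hl, hmem⟩ := exists_nodup_isChain_mem_iff_reflTransGen hdeg N.arcs
    fun x hx => N.arcComponent_subset a ((N.mem_arcComponent ha).mpr hx)
  refine ⟨N.arcComponent_subset a, l, List.ne_nil_of_mem ((hmem a).mpr .refl), hnd, ?_,
    hl.imp fun _ _ h => h.2.2⟩
  ext x
  rw [List.mem_toFinset, hmem, N.mem_arcComponent ha]

theorem isMaxZigzag_arcComponent (hdeg : DegreeLeTwo N.ArcAdj) {a : V × V} (ha : a ∈ N.arcs) :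
    N.IsMaxZigzag (N.arcComponent a) :=
  ⟨isZigzag_arcComponent hdeg ha, fun _ hZ hsub =>
    (hZ.subset_arcComponent (hsub (N.mem_arcComponent_self ha))).antisymm hsub⟩

end Dgraph

theorem stmt2_general {V : Type*} [DecidableEq V] (N : Dgraph V) (X : Finset V)
    (hN : Dgraph.IsRBPN N X) :
    ∀ a ∈ N.arcs, ∃! Z : Finset (V × V), Dgraph.IsMaxZigzag N Z ∧ a ∈ Z := by
  have hdeg : DegreeLeTwo N.ArcAdj := Dgraph.degreeLeTwo_arcAdj
    (fun _ hv => (hN.indeg_le_two_and_outdeg_le_two hv).1)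
    (fun _ hv => (hN.indeg_le_two_and_outdeg_le_two hv).2)
  intro a ha
  refine ⟨N.arcComponent a,
    ⟨Dgraph.isMaxZigzag_arcComponent hdeg ha, N.mem_arcComponent_self ha⟩, ?_⟩
  rintro Z ⟨hZ, haZ⟩
  exact (hZ.2 _ (Dgraph.isZigzag_arcComponent hdeg ha) (hZ.1.subset_arcComponent haZ)).symm

/-- In a tree-based rooted binary phylogenetic `X`-network `N`, every
arc belongs to exactly one maximal zig-zag trail; hence the arc sets of the maximal
zig-zag trails partition `A(N)` and `N` is uniquely decomposed into its maximal
zig-zag trails. -/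
theorem stmt2 {V : Type*} [DecidableEq V] (N : Dgraph V) (X : Finset V)
    (hN : Dgraph.IsRBPN N X) (hTB : Dgraph.IsTreeBased N X) :
    ∀ a ∈ N.arcs, ∃! Z : Finset (V × V), Dgraph.IsMaxZigzag N Z ∧ a ∈ Z :=
  stmt2_general N X hN
end

section
/- Let N be a tree-based rooted binary phylogenetic X-network. Then every maximal zig-zag trail of N is a crown, an M-fence, or an N-fence. -/
namespace Dgraph

variable {V : Type*}

/-- The `k`-th arc (`k ≥ 1`) of a zig-zag written `v₀ < v₁ > v₂ < v₃ > ⋯`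
(so `a₁ = (v₁, v₀)`, `a₂ = (v₁, v₂)`, `a₃ = (v₃, v₂)`, `a₄ = (v₃, v₄)`, …). -/
def mArc (v : ℕ → V) (k : ℕ) : V × V :=
  if k % 2 = 1 then (v k, v (k - 1)) else (v (k - 1), v k)

/-- The `k`-th arc (`k ≥ 1`) of a zig-zag written `v₀ > v₁ < v₂ > v₃ < ⋯`
(so `a₁ = (v₀, v₁)`, `a₂ = (v₂, v₁)`, `a₃ = (v₂, v₃)`, …). -/
def nArc (v : ℕ → V) (k : ℕ) : V × V :=
  if k % 2 = 1 then (v (k - 1), v k) else (v k, v (k - 1))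

/-- `Z` can be written cyclically as `v₀ < v₁ > v₂ < ⋯ > v_m = v₀` with `m` even,
`m ≥ 4` (a crown). -/
def CrownForm [DecidableEq V] (Z : Finset (V × V)) : Prop :=
  ∃ (m : ℕ) (v : ℕ → V), 4 ≤ m ∧ m % 2 = 0 ∧ v m = v 0 ∧ Z.card = m ∧
    Z = (Finset.Icc 1 m).image (mArc v)

/-- `Z` can be written as `v₀ < v₁ > v₂ < ⋯ < v_{m-1} > v_m` with `m` even
(an M-fence). -/
def MFenceForm [DecidableEq V] (Z : Finset (V × V)) : Prop :=
  ∃ (m : ℕ) (v : ℕ → V), m % 2 = 0 ∧ Z.card = m ∧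
    Z = (Finset.Icc 1 m).image (mArc v)

/-- `Z` can be written as `v₀ > v₁ < v₂ > ⋯ < v_{m-1} > v_m` with `m` odd
(an N-fence). -/
def NFenceForm [DecidableEq V] (Z : Finset (V × V)) : Prop :=
  ∃ (m : ℕ) (v : ℕ → V), m % 2 = 1 ∧ Z.card = m ∧
    Z = (Finset.Icc 1 m).image (nArc v)

end Dgraph

/-!
Since in- and out-degrees are at most two, consecutive arcs of a zig-zag trail alternately share
a tail and a head. A maximal zig-zag trail is therefore an M-fence, an N-fence (possibly read
backwards), or it has even length and its first and last arcs share their heads with their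
neighbours: then it is either closed, hence a crown, or a W-fence `v₀ > v₁ < v₂ > ⋯ < v_m`.
W-fences cannot be maximal in a tree-based network: by maximality and the degree bound, every arc
leaving one of the `m / 2 + 1` tails lies in the fence, and each of these tails keeps an outgoing
arc in a support tree; but a support tree has in-degree at most one, so it contains at most
`m / 2` fence arcs, one per head.
-/

lemma Finset.image_Icc_one_eq_image_range {β : Type*} [DecidableEq β] {m : ℕ} {f g : ℕ → β}
    (hfg : ∀ k, 1 ≤ k → k ≤ m → f k = g (k - 1)) : (Icc 1 m).image f = (range m).image g := by
  ext x
  simp only [mem_image, mem_Icc, mem_range]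
  constructor
  · rintro ⟨k, hk, rfl⟩
    exact ⟨k - 1, by omega, (hfg k hk.1 hk.2).symm⟩
  · rintro ⟨i, hi, rfl⟩
    exact ⟨i + 1, ⟨by omega, by omega⟩, hfg (i + 1) (by omega) (by omega)⟩

namespace Dgraph

open Finset

variable {V : Type*}

def ShareHeadOrTail (a b : V × V) : Prop :=
  a.2 = b.2 ∨ a.1 = b.1

lemma ShareHeadOrTail.symm {a b : V × V} (h : ShareHeadOrTail a b) : ShareHeadOrTail b a :=
  h.imp Eq.symm Eq.symm

section Patterns

variable {m : ℕ} {a : ℕ → V × V}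

/-- Arc sequences of the shape `v₀ < v₁ > v₂ < ⋯`. -/
def IsMPattern (m : ℕ) (a : ℕ → V × V) : Prop :=
  ∀ i, i + 1 < m → (i % 2 = 0 → (a i).1 = (a (i + 1)).1) ∧ (i % 2 = 1 → (a i).2 = (a (i + 1)).2)

/-- Arc sequences of the shape `v₀ > v₁ < v₂ > ⋯`: reversing every arc makes them M-patterns. -/
def IsNPattern (m : ℕ) (a : ℕ → V × V) : Prop :=
  IsMPattern m (Prod.swap ∘ a)

lemma isMPattern_of_alternating (hs : ∀ i, i + 1 < m → ShareHeadOrTail (a i) (a (i + 1)))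
    (htail : ∀ i, i + 2 < m → (a i).1 = (a (i + 1)).1 → (a (i + 1)).1 ≠ (a (i + 2)).1)
    (hhead : ∀ i, i + 2 < m → (a i).2 = (a (i + 1)).2 → (a (i + 1)).2 ≠ (a (i + 2)).2)
    (h₀ : 1 < m → (a 0).1 = (a 1).1) : IsMPattern m a := by
  intro i
  induction i with
  | zero => exact fun hm => ⟨fun _ => h₀ hm, fun h => absurd h (by norm_num)⟩
  | succ i ih =>
    intro hi
    obtain ⟨hev, hodd⟩ := ih (by omega)
    rcases Nat.mod_two_eq_zero_or_one i with hp | hp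
    · exact ⟨fun _ => by omega, fun _ => (hs (i + 1) hi).resolve_right (htail i hi (hev hp))⟩
    · exact ⟨fun _ => (hs (i + 1) hi).resolve_left (hhead i hi (hodd hp)), fun _ => by omega⟩

lemma IsMPattern.reverse (h : IsMPattern m a) (hm : m % 2 = 1) :
    IsNPattern m (fun i => a (m - 1 - i)) := by
  intro i hi
  have hj := h (m - 2 - i) (by omega)
  rw [show m - 2 - i + 1 = m - 1 - i by omega] at hj
  simp only [Function.comp_apply, Prod.fst_swap, Prod.snd_swap,
    show m - 1 - (i + 1) = m - 2 - i by omega]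
  exact ⟨fun _ => (hj.2 (by omega)).symm, fun _ => (hj.1 (by omega)).symm⟩

lemma IsNPattern.rotate (h : IsNPattern m a) (hm : m % 2 = 0) (hclosed : (a (m - 1)).1 = (a 0).1) :
    IsMPattern m (fun i => if i + 1 = m then a 0 else a (i + 1)) := by
  intro i hi
  dsimp only
  rw [if_neg (by omega)]
  by_cases hlast : i + 2 = m
  · rw [if_pos (by omega), show i + 1 = m - 1 by omega]
    exact ⟨fun _ => hclosed, fun _ => by omega⟩
  · rw [if_neg (by omega)]
    have hj := h (i + 1) (by omega)
    simp only [Function.comp_apply, Prod.fst_swap, Prod.snd_swap] at hj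
    exact ⟨fun _ => hj.2 (by omega), fun _ => hj.1 (by omega)⟩

/-- The vertex `v_k` of an M-pattern `v₀ < v₁ > ⋯ > v_m`; at `k = 0`, truncated subtraction gives
the head of `a 0`. -/
def mFenceVertex (a : ℕ → V × V) (k : ℕ) : V :=
  if k % 2 = 1 then (a (k - 1)).1 else (a (k - 1)).2

lemma IsMPattern.mArc_mFenceVertex (h : IsMPattern m a) {k : ℕ} (hk : 1 ≤ k) (hkm : k ≤ m) :
    mArc (mFenceVertex a) k = a (k - 1) := by
  rcases Nat.mod_two_eq_zero_or_one k with hk2 | hk2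
  · have hprev := (h (k - 2) (by omega)).1 (by omega)
    rw [show k - 2 + 1 = k - 1 by omega] at hprev
    simp [mArc, mFenceVertex, hk2, show (k - 1) % 2 = 1 by omega,
      show k - 1 - 1 = k - 2 by omega, hprev]
  · obtain rfl | hk1 := eq_or_ne k 1
    · simp [mArc, mFenceVertex]
    have hprev := (h (k - 2) (by omega)).2 (by omega)
    rw [show k - 2 + 1 = k - 1 by omega] at hprev
    simp [mArc, mFenceVertex, hk2, show (k - 1) % 2 = 0 by omega,
      show k - 1 - 1 = k - 2 by omega, hprev]

lemma nArc_eq_swap_mArc (v : ℕ → V) (k : ℕ) : nArc v k = (mArc v k).swap := by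
  unfold nArc mArc
  split_ifs <;> rfl

lemma IsNPattern.nArc_mFenceVertex (h : IsNPattern m a) {k : ℕ} (hk : 1 ≤ k) (hkm : k ≤ m) :
    nArc (mFenceVertex (Prod.swap ∘ a)) k = a (k - 1) := by
  rw [nArc_eq_swap_mArc, IsMPattern.mArc_mFenceVertex h hk hkm, Function.comp_apply,
    Prod.swap_swap]

end Patterns

variable [DecidableEq V]

section Degrees

variable {G : Dgraph V} {s : Finset (V × V)} {v : V}

lemma card_le_indeg (hs : s ⊆ G.arcs) (hv : ∀ e ∈ s, e.2 = v) : s.card ≤ G.indeg v :=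
  card_le_card fun e he => mem_filter.2 ⟨hs he, hv e he⟩

lemma card_le_outdeg (hs : s ⊆ G.arcs) (hv : ∀ e ∈ s, e.1 = v) : s.card ≤ G.outdeg v :=
  card_le_card fun e he => mem_filter.2 ⟨hs he, hv e he⟩

lemma indeg_eq_zero_of_notMem (hv : v ∉ G.verts) : G.indeg v = 0 :=
  card_eq_zero.2 <| filter_eq_empty_iff.2 fun e he h => hv (h ▸ G.head_mem e he)

lemma outdeg_eq_zero_of_notMem (hv : v ∉ G.verts) : G.outdeg v = 0 :=
  card_eq_zero.2 <| filter_eq_empty_iff.2 fun e he h => hv (h ▸ G.tail_mem e he)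

lemma exists_arc_of_outdeg_pos (h : 0 < G.outdeg v) : ∃ e ∈ G.arcs, e.1 = v := by
  obtain ⟨e, he⟩ := card_pos.1 h
  exact ⟨e, (mem_filter.1 he).1, (mem_filter.1 he).2⟩

lemma outdeg_pos_of_mem {e : V × V} (he : e ∈ G.arcs) : 0 < G.outdeg e.1 :=
  card_pos.2 ⟨e, mem_filter.2 ⟨he, rfl⟩⟩

lemma card_image_fst_le_card_image_snd {τ : Dgraph V} {Z : Finset (V × V)}
    (hin : ∀ v, τ.indeg v ≤ 1) (hout : ∀ v ∈ Z.image Prod.fst, ∃ e ∈ Z, e ∈ τ.arcs ∧ e.1 = v) :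
    (Z.image Prod.fst).card ≤ (Z.image Prod.snd).card := by
  set S := Z.filter (· ∈ τ.arcs)
  have hinj : Set.InjOn Prod.snd (S : Set (V × V)) := by
    intro e he e' he' hee'
    by_contra hne
    have h₂ := card_le_indeg (G := τ) (s := {e, e'}) (v := e.2)
      (by simp [insert_subset_iff, (mem_filter.1 he).2, (mem_filter.1 he').2])
      (by simp [hee'])
    rw [card_pair hne] at h₂
    exact absurd (hin e.2) (by omega)
  calc (Z.image Prod.fst).card ≤ (S.image Prod.fst).card := card_le_card fun v hv => by
        obtain ⟨e, heZ, heτ, rfl⟩ := hout v hv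
        exact mem_image_of_mem _ (mem_filter.2 ⟨heZ, heτ⟩)
    _ ≤ S.card := card_image_le
    _ = (S.image Prod.snd).card := (card_image_of_injOn hinj).symm
    _ ≤ (Z.image Prod.snd).card := card_le_card (image_subset_image (filter_subset _ _))

end Degrees

namespace IsRBPN

variable {N : Dgraph V} {X : Finset V}

lemma indeg_le_two_and_outdeg_le_two_s3 (hN : N.IsRBPN X) (v : V) :
    N.indeg v ≤ 2 ∧ N.outdeg v ≤ 2 := by
  by_cases hv : v ∈ N.verts
  · obtain ⟨-, -, -, ρ, -, hρin, hρout, -, hleaf, hother⟩ := hN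
    by_cases hvρ : v = ρ
    · subst hvρ; omega
    by_cases hX : v ∈ X
    · obtain ⟨-, h1, h2⟩ := (hleaf v hv).2 hX; omega
    rcases hother v hv hX hvρ with ⟨h1, h2⟩ | ⟨h1, h2⟩ <;> omega
  · simp [indeg_eq_zero_of_notMem hv, outdeg_eq_zero_of_notMem hv]

lemma outdeg_eq_zero_of_mem (hN : N.IsRBPN X) {v : V} (hv : v ∈ X) : N.outdeg v = 0 := by
  obtain ⟨-, -, hXsub, ρ, -, -, -, -, hleaf, -⟩ := hN
  exact ((hleaf v (hXsub hv)).2 hv).2.2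

lemma eq_or_eq_of_fst_eq (hN : N.IsRBPN X) {a b e : V × V} (ha : a ∈ N.arcs)
    (hb : b ∈ N.arcs) (he : e ∈ N.arcs) (hab : a ≠ b) (hba : b.1 = a.1) (hea : e.1 = a.1) :
    e = a ∨ e = b := by
  by_contra! h
  have hsub : {a, b, e} ⊆ N.arcs := by simp [insert_subset_iff, ha, hb, he]
  have h3 := card_le_outdeg hsub (v := a.1) (by simp [hba, hea])
  rw [card_eq_three.2 ⟨a, b, e, hab, h.1.symm, h.2.symm, rfl⟩] at h3
  have := (hN.indeg_le_two_and_outdeg_le_two_s3 a.1).2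
  omega

lemma eq_or_eq_of_snd_eq (hN : N.IsRBPN X) {a b e : V × V} (ha : a ∈ N.arcs)
    (hb : b ∈ N.arcs) (he : e ∈ N.arcs) (hab : a ≠ b) (hba : b.2 = a.2) (hea : e.2 = a.2) :
    e = a ∨ e = b := by
  by_contra! h
  have hsub : {a, b, e} ⊆ N.arcs := by simp [insert_subset_iff, ha, hb, he]
  have h3 := card_le_indeg hsub (v := a.2) (by simp [hba, hea])
  rw [card_eq_three.2 ⟨a, b, e, hab, h.1.symm, h.2.symm, rfl⟩] at h3
  have := (hN.indeg_le_two_and_outdeg_le_two_s3 a.2).1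
  omega

end IsRBPN

section SupportTree

variable {G H T τ N : Dgraph V} {X : Finset V}

lemma SubdivideArc.exists_degrees (h : SubdivideArc G H) :
    ∃ w ∉ G.verts, H.verts = insert w G.verts ∧ ∀ x,
      H.indeg x = G.indeg x + (if x = w then 1 else 0) ∧
      H.outdeg x = G.outdeg x + (if x = w then 1 else 0) := by
  obtain ⟨u, v, w, huv, hw, hV, hA⟩ := h
  have huw : u ≠ w := fun h => hw (h ▸ G.tail_mem _ huv)
  have hvw : v ≠ w := fun h => hw (h ▸ G.head_mem _ huv)
  have hnew : ∀ e ∈ G.arcs, e.1 ≠ w ∧ e.2 ≠ w := fun e he =>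
    ⟨fun h => hw (h ▸ G.tail_mem e he), fun h => hw (h ▸ G.head_mem e he)⟩
  have h₁ : (u, w) ∉ insert (w, v) (G.arcs.erase (u, v)) := by
    simp only [mem_insert, Prod.mk.injEq, mem_erase, not_or, not_and]
    exact ⟨fun h => absurd h huw, fun _ he => (hnew _ he).2 rfl⟩
  have h₂ : (w, v) ∉ G.arcs.erase (u, v) := fun he => (hnew _ (mem_of_mem_erase he)).1 rfl
  refine ⟨w, hw, hV, fun x => ⟨?_, ?_⟩⟩
  · unfold indeg
    rw [hA, card_filter, card_filter, sum_insert h₁, sum_insert h₂, ← sum_erase_add _ _ huv]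
    split_ifs <;> simp_all <;> omega
  · unfold outdeg
    rw [hA, card_filter, card_filter, sum_insert h₁, sum_insert h₂, ← sum_erase_add _ _ huv]
    split_ifs <;> simp_all <;> omega

lemma IsSubdivisionOf.indeg_le_one (h : IsSubdivisionOf T τ) (hT : ∀ v, T.indeg v ≤ 1) :
    ∀ v, τ.indeg v ≤ 1 := by
  induction h with
  | refl => exact hT
  | step _ hs ih =>
    obtain ⟨w, hw, -, hdeg⟩ := hs.exists_degrees
    intro x
    rw [(hdeg x).1]
    split_ifs with hx
    · simp [hx, indeg_eq_zero_of_notMem hw]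
    · simpa using ih x

lemma IsSubdivisionOf.outdeg_pos (h : IsSubdivisionOf T τ)
    (hT : ∀ v ∈ T.verts, v ∉ X → 0 < T.outdeg v) : ∀ v ∈ τ.verts, v ∉ X → 0 < τ.outdeg v := by
  induction h with
  | refl => exact hT
  | step _ hs ih =>
    obtain ⟨w, -, hV, hdeg⟩ := hs.exists_degrees
    intro x hx hxX
    rw [(hdeg x).2]
    rw [hV, mem_insert] at hx
    split_ifs with hxw
    · omega
    · simpa using ih x (hx.resolve_left hxw) hxX

lemma IsRBPT.indeg_le_one (hT : T.IsRBPT X) (v : V) : T.indeg v ≤ 1 := by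
  have h2 := (hT.1.indeg_le_two_and_outdeg_le_two_s3 v).1
  by_cases hv : v ∈ T.verts
  · have := hT.2 v hv
    omega
  · simp [indeg_eq_zero_of_notMem hv]

lemma IsRBPT.outdeg_pos (hT : T.IsRBPT X) : ∀ v ∈ T.verts, v ∉ X → 0 < T.outdeg v := by
  obtain ⟨⟨-, -, -, ρ, -, -, hρout, -, -, hother⟩, -⟩ := hT
  intro v hv hvX
  by_cases hvρ : v = ρ
  · subst hvρ; omega
  rcases hother v hv hvX hvρ with ⟨-, h⟩ | ⟨-, h⟩ <;> omega

lemma IsSupportTree.indeg_le_one (hτ : N.IsSupportTree X τ) (v : V) : τ.indeg v ≤ 1 := by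
  obtain ⟨-, -, T, hT, hsub⟩ := hτ
  exact hsub.indeg_le_one hT.indeg_le_one v

lemma IsSupportTree.exists_arc_fst_eq (hτ : N.IsSupportTree X τ) (hN : N.IsRBPN X)
    {e : V × V} (he : e ∈ N.arcs) : ∃ e' ∈ τ.arcs, e'.1 = e.1 := by
  obtain ⟨hV, -, T, hT, hsub⟩ := hτ
  have hnotX : e.1 ∉ X := fun hX => (outdeg_pos_of_mem he).ne' (hN.outdeg_eq_zero_of_mem hX)
  exact exists_arc_of_outdeg_pos <|
    hsub.outdeg_pos hT.outdeg_pos _ (hV ▸ N.tail_mem e he) hnotX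

end SupportTree

structure IsZigzagSeq (Z : Finset (V × V)) (m : ℕ) (a : ℕ → V × V) : Prop where
  image_eq : (range m).image a = Z
  injOn : Set.InjOn a (range m)
  shareHeadOrTail : ∀ i, i + 1 < m → ShareHeadOrTail (a i) (a (i + 1))

namespace IsZigzagSeq

variable {N : Dgraph V} {X : Finset V} {Z : Finset (V × V)} {m : ℕ} {a : ℕ → V × V}

lemma card_eq (h : IsZigzagSeq Z m a) : Z.card = m := by
  rw [← h.image_eq, card_image_of_injOn h.injOn, card_range]

lemma mem (h : IsZigzagSeq Z m a) {i : ℕ} (hi : i < m) : a i ∈ Z :=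
  h.image_eq ▸ mem_image_of_mem a (mem_range.2 hi)

lemma ne (h : IsZigzagSeq Z m a) {i j : ℕ} (hi : i < m) (hj : j < m) (hij : i ≠ j) :
    a i ≠ a j :=
  fun he => hij (h.injOn (mem_range.2 hi) (mem_range.2 hj) he)

lemma reverse (h : IsZigzagSeq Z m a) : IsZigzagSeq Z m (fun i => a (m - 1 - i)) where
  image_eq := by
    rw [← h.image_eq]
    ext x
    simp only [mem_image, mem_range]
    constructor
    · rintro ⟨i, hi, rfl⟩
      exact ⟨m - 1 - i, by omega, rfl⟩
    · rintro ⟨i, hi, rfl⟩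
      exact ⟨m - 1 - i, by omega, by rw [show m - 1 - (m - 1 - i) = i by omega]⟩
  injOn i hi j hj hij := by
    simp only [coe_range, Set.mem_Iio] at hi hj
    have := h.injOn (mem_range.2 (by omega)) (mem_range.2 (by omega)) hij
    omega
  shareHeadOrTail i hi := by
    have := h.shareHeadOrTail (m - 2 - i) (by omega)
    rw [show m - 2 - i + 1 = m - 1 - i by omega] at this
    rw [show m - 1 - (i + 1) = m - 2 - i by omega]
    exact this.symm

lemma snoc (h : IsZigzagSeq Z m a) {e : V × V} (he : e ∉ Z)
    (hs : ShareHeadOrTail (a (m - 1)) e) :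
    IsZigzagSeq (insert e Z) (m + 1) (fun i => if i = m then e else a i) where
  image_eq := by
    rw [range_add_one, image_insert, if_pos rfl, ← h.image_eq]
    congr 1
    exact image_congr fun i hi => if_neg (ne_of_lt (mem_range.1 hi))
  injOn i hi j hj hij := by
    simp only [coe_range, Set.mem_Iio] at hi hj
    have hmem : ∀ k, k < m → a k ≠ e := fun k hk hke => he (hke ▸ h.mem hk)
    dsimp only at hij
    split_ifs at hij with h₁ h₂ h₂
    · omega
    · exact absurd hij.symm (hmem j (by omega))
    · exact absurd hij (hmem i (by omega))
    · exact h.injOn (mem_range.2 (by omega)) (mem_range.2 (by omega)) hij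
  shareHeadOrTail i hi := by
    by_cases him : i + 1 = m
    · rw [if_neg (by omega), if_pos him, show i = m - 1 by omega]
      exact hs
    · rw [if_neg (by omega), if_neg him]
      exact h.shareHeadOrTail i (by omega)

lemma isZigzag (h : IsZigzagSeq Z m a) (hm : 0 < m) (hZ : Z ⊆ N.arcs) :
    N.IsZigzag Z := by
  refine ⟨hZ, (List.range m).map a, by simp; omega, ?_, ?_, ?_⟩
  · exact (List.nodup_range).map_on fun i hi j hj => h.injOn (by simpa using hi) (by simpa using hj)
  · ext x
    simp [← h.image_eq]
  · show List.IsChain _ _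
    rw [List.isChain_iff_getElem]
    intro i hi
    simp only [List.length_map, List.length_range] at hi
    simpa [ShareHeadOrTail] using h.shareHeadOrTail i hi

lemma rotate (h : IsZigzagSeq Z m a) (hm : 0 < m) (hclosed : ShareHeadOrTail (a (m - 1)) (a 0)) :
    IsZigzagSeq Z m (fun i => if i + 1 = m then a 0 else a (i + 1)) where
  image_eq := by
    rw [← h.image_eq]
    ext x
    simp only [mem_image, mem_range]
    constructor
    · rintro ⟨i, hi, rfl⟩
      split_ifs
      · exact ⟨0, hm, rfl⟩
      · exact ⟨i + 1, by omega, rfl⟩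
    · rintro ⟨j, hj, rfl⟩
      obtain rfl | hj0 := eq_or_ne j 0
      · exact ⟨m - 1, by omega, if_pos (by omega)⟩
      · exact ⟨j - 1, by omega, by rw [if_neg (by omega), Nat.sub_add_cancel (by omega)]⟩
  injOn i hi j hj hij := by
    simp only [coe_range, Set.mem_Iio] at hi hj
    dsimp only at hij
    split_ifs at hij
    · omega
    · exact absurd hij (h.ne hm (by omega) (by omega))
    · exact absurd hij (h.ne (by omega) hm (by omega))
    · have := h.injOn (mem_range.2 (by omega)) (mem_range.2 (by omega)) hij
      omega
  shareHeadOrTail i hi := by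
    rw [if_neg (by omega)]
    split_ifs with hlast
    · rwa [show i + 1 = m - 1 by omega]
    · exact h.shareHeadOrTail (i + 1) (by omega)

lemma isMPattern_or_isNPattern (hN : N.IsRBPN X) (hZ : Z ⊆ N.arcs) (h : IsZigzagSeq Z m a) :
    IsMPattern m a ∨ IsNPattern m a := by
  have harc : ∀ i, i < m → a i ∈ N.arcs := fun i hi => hZ (h.mem hi)
  have htail : ∀ i, i + 2 < m → (a i).1 = (a (i + 1)).1 → (a (i + 1)).1 ≠ (a (i + 2)).1 := by
    intro i hi h₁ h₂
    rcases hN.eq_or_eq_of_fst_eq (harc i (by omega)) (harc (i + 1) (by omega)) (harc (i + 2) hi)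
      (h.ne (by omega) (by omega) (by omega)) h₁.symm (h₂.symm.trans h₁.symm) with h' | h'
    · exact h.ne hi (by omega) (by omega) h'
    · exact h.ne hi (by omega) (by omega) h'
  have hhead : ∀ i, i + 2 < m → (a i).2 = (a (i + 1)).2 → (a (i + 1)).2 ≠ (a (i + 2)).2 := by
    intro i hi h₁ h₂
    rcases hN.eq_or_eq_of_snd_eq (harc i (by omega)) (harc (i + 1) (by omega)) (harc (i + 2) hi)
      (h.ne (by omega) (by omega) (by omega)) h₁.symm (h₂.symm.trans h₁.symm) with h' | h'
    · exact h.ne hi (by omega) (by omega) h'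
    · exact h.ne hi (by omega) (by omega) h'
  by_cases hm : 1 < m
  · rcases h.shareHeadOrTail 0 hm with h₀ | h₀
    · exact Or.inr <| isMPattern_of_alternating (fun i hi => Or.symm (h.shareHeadOrTail i hi))
        hhead htail fun _ => h₀
    · exact Or.inl <| isMPattern_of_alternating h.shareHeadOrTail htail hhead fun _ => h₀
  · exact Or.inl fun i hi => absurd hi (by omega)

lemma mFenceForm (h : IsZigzagSeq Z m a) (hpat : IsMPattern m a) (hm : m % 2 = 0) :
    MFenceForm Z :=
  ⟨m, mFenceVertex a, hm, h.card_eq, by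
    rw [image_Icc_one_eq_image_range fun _ => hpat.mArc_mFenceVertex, h.image_eq]⟩

lemma nFenceForm (h : IsZigzagSeq Z m a) (hpat : IsNPattern m a) (hm : m % 2 = 1) :
    NFenceForm Z :=
  ⟨m, mFenceVertex (Prod.swap ∘ a), hm, h.card_eq, by
    rw [image_Icc_one_eq_image_range fun _ => hpat.nArc_mFenceVertex, h.image_eq]⟩

lemma crownForm (h : IsZigzagSeq Z m a) (hm₀ : 0 < m) (hpat : IsNPattern m a) (hm : m % 2 = 0)
    (hclosed : (a (m - 1)).1 = (a 0).1) : CrownForm Z := by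
  have hhead : (a 0).2 = (a 1).2 := (hpat 0 (by omega)).1 rfl
  have hm₄ : 4 ≤ m := by
    by_contra
    obtain rfl : m = 2 := by omega
    exact h.ne (i := 1) (j := 0) (by omega) (by omega) (by omega) (Prod.ext hclosed hhead.symm)
  set b : ℕ → V × V := fun i => if i + 1 = m then a 0 else a (i + 1) with hb
  have hbpat : IsMPattern m b := hpat.rotate hm hclosed
  have hbseq : IsZigzagSeq Z m b := h.rotate hm₀ (Or.inr hclosed)
  refine ⟨m, mFenceVertex b, hm₄, hm, ?_, h.card_eq, by
    rw [image_Icc_one_eq_image_range fun _ => hbpat.mArc_mFenceVertex, hbseq.image_eq]⟩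
  simp [mFenceVertex, hb, hm, show m - 1 + 1 = m by omega, show ¬ (1 = m) by omega, hhead]

lemma card_image_snd_le (h : IsZigzagSeq Z m a) (hpat : IsNPattern m a) (hm : m % 2 = 0) :
    (Z.image Prod.snd).card ≤ m / 2 := by
  calc (Z.image Prod.snd).card ≤ ((range (m / 2)).image fun j => (a (2 * j)).2).card := by
        refine card_le_card fun v hv => ?_
        rw [← h.image_eq, image_image] at hv
        obtain ⟨i, hi, rfl⟩ := mem_image.1 hv
        refine mem_image.2 ⟨i / 2, mem_range.2 (by rw [mem_range] at hi; omega), ?_⟩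
        rcases Nat.mod_two_eq_zero_or_one i with hi2 | hi2
        · simp [show 2 * (i / 2) = i by omega]
        · have hhead := (hpat (i - 1) (by rw [mem_range] at hi; omega)).1 (by omega)
          simp only [Function.comp_apply, Prod.fst_swap] at hhead
          simp [show 2 * (i / 2) = i - 1 by omega, hhead, show i - 1 + 1 = i by omega]
    _ ≤ m / 2 := card_image_le.trans (card_range _).le

lemma eq_or_eq_of_fst_eq (hN : N.IsRBPN X) (hZ : Z ⊆ N.arcs) (h : IsZigzagSeq Z m a)
    (hpat : IsNPattern m a) {i : ℕ} (hi : i % 2 = 1) (him : i + 1 < m) {e : V × V}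
    (he : e ∈ N.arcs) (hei : e.1 = (a i).1) : e = a i ∨ e = a (i + 1) :=
  hN.eq_or_eq_of_fst_eq (hZ (h.mem (by omega))) (hZ (h.mem him)) he
    (h.ne (by omega) him (by omega)) ((hpat i him).2 hi).symm hei

lemma le_card_image_fst (hN : N.IsRBPN X) (hZ : Z ⊆ N.arcs) (h : IsZigzagSeq Z m a)
    (hpat : IsNPattern m a) (hm : m % 2 = 0) (hopen : (a (m - 1)).1 ≠ (a 0).1) :
    m / 2 + 1 ≤ (Z.image Prod.fst).card := by
  have hm₀ : m ≠ 0 := by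
    rintro rfl
    exact hopen rfl
  have hpair : ∀ i k, i % 2 = 1 → i + 1 < m → k < m → (a k).1 = (a i).1 → k = i ∨ k = i + 1 :=
    fun i k hi him hk hki => (h.eq_or_eq_of_fst_eq hN hZ hpat hi him (hZ (h.mem hk)) hki).imp
      (h.injOn (mem_range.2 hk) (mem_range.2 (by omega))) (h.injOn (mem_range.2 hk) (mem_range.2 him))
  -- the tails `v₀, v₂, …, v_m` of the fence `v₀ > v₁ < v₂ > ⋯ < v_m` (`0 - 1 = 0`)
  set t : ℕ → V := fun j => (a (2 * j - 1)).1
  have hne : ∀ j j', j < j' → j' ≤ m / 2 → t j ≠ t j' := by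
    intro j j' hjj' hj' htt
    by_cases hlast : j' = m / 2
    · obtain rfl | hj := eq_or_ne j 0
      · exact hopen (by simpa [t, hlast, show 2 * (m / 2) - 1 = m - 1 by omega] using htt.symm)
      · have := hpair (2 * j - 1) (2 * j' - 1) (by omega) (by omega) (by omega) htt.symm
        omega
    · have := hpair (2 * j' - 1) (2 * j - 1) (by omega) (by omega) (by omega) htt
      omega
  have hinj : Set.InjOn t (range (m / 2 + 1)) := by
    intro j hj j' hj' htt
    simp only [coe_range, Set.mem_Iio] at hj hj'
    by_contra hjj'
    rcases Nat.lt_or_gt_of_ne hjj' with hlt | hlt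
    · exact hne j j' hlt (by omega) htt
    · exact hne j' j hlt (by omega) htt.symm
  calc m / 2 + 1 = ((range (m / 2 + 1)).image t).card := by
        rw [card_image_of_injOn hinj, card_range]
    _ ≤ (Z.image Prod.fst).card := card_le_card fun v hv => by
        obtain ⟨j, hj, rfl⟩ := mem_image.1 hv
        exact mem_image_of_mem _ (h.mem (by rw [mem_range] at hj; omega))

end IsZigzagSeq

lemma IsZigzag.exists_isZigzagSeq {N : Dgraph V} {Z : Finset (V × V)} (hZ : N.IsZigzag Z) :
    ∃ m a, 0 < m ∧ IsZigzagSeq Z m a := by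
  obtain ⟨-, l, hl, hnd, hlZ, hch⟩ := hZ
  obtain ⟨x, -⟩ := List.exists_mem_of_ne_nil l hl
  have hget : ∀ i (hi : i < l.length), l.getD i x = l[i] := fun i hi => List.getD_eq_getElem l x hi
  refine ⟨l.length, fun i => l.getD i x, List.length_pos_iff.2 hl, ⟨?_, ?_, ?_⟩⟩
  · rw [← hlZ]
    ext y
    simp only [mem_image, mem_range, List.mem_toFinset, List.mem_iff_getElem]
    constructor
    · rintro ⟨i, hi, rfl⟩
      exact ⟨i, hi, (hget i hi).symm⟩
    · rintro ⟨i, hi, rfl⟩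
      exact ⟨i, hi, hget i hi⟩
  · intro i hi j hj hij
    simp only [coe_range, Set.mem_Iio] at hi hj
    simp only [hget i hi, hget j hj] at hij
    exact (hnd.getElem_inj_iff).1 hij
  · intro i hi
    simp only [hget i (by omega), hget (i + 1) hi]
    exact List.isChain_iff_getElem.1 hch i hi

namespace IsMaxZigzag

variable {N τ : Dgraph V} {X : Finset V} {Z : Finset (V × V)} {m : ℕ} {a : ℕ → V × V}
  {e : V × V}

lemma mem_of_shareHeadOrTail_last (hZ : N.IsMaxZigzag Z) (h : IsZigzagSeq Z m a)
    (he : e ∈ N.arcs) (hs : ShareHeadOrTail (a (m - 1)) e) : e ∈ Z := by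
  by_contra heZ
  have hzig := (h.snoc heZ hs).isZigzag (by omega) (insert_subset he hZ.1.1)
  exact heZ (hZ.2 _ hzig (subset_insert e Z) ▸ mem_insert_self e Z)

lemma mem_of_shareHeadOrTail_first (hZ : N.IsMaxZigzag Z) (h : IsZigzagSeq Z m a)
    (he : e ∈ N.arcs) (hs : ShareHeadOrTail (a 0) e) : e ∈ Z :=
  hZ.mem_of_shareHeadOrTail_last h.reverse he (by simpa using hs)

lemma mem_of_fst_mem (hZ : N.IsMaxZigzag Z) (hN : N.IsRBPN X) (h : IsZigzagSeq Z m a)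
    (hpat : IsNPattern m a) (he : e ∈ N.arcs)
    (hv : e.1 ∈ Z.image Prod.fst) : e ∈ Z := by
  rw [← h.image_eq, image_image] at hv
  obtain ⟨i, hi, hie⟩ := mem_image.1 hv
  rw [mem_range] at hi
  simp only [Function.comp_apply] at hie
  by_cases hi₀ : i = 0
  · exact hZ.mem_of_shareHeadOrTail_first h he (Or.inr (hi₀ ▸ hie))
  by_cases hlast : i = m - 1
  · exact hZ.mem_of_shareHeadOrTail_last h he (Or.inr (hlast ▸ hie))
  rcases Nat.mod_two_eq_zero_or_one i with hi2 | hi2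
  · have htail : (a (i - 1)).1 = (a i).1 := by
      simpa [show i - 1 + 1 = i by omega] using (hpat (i - 1) (by omega)).2 (by omega)
    rcases h.eq_or_eq_of_fst_eq hN hZ.1.1 hpat (by omega) (by omega) he
      (hie.symm.trans htail.symm) with rfl | rfl
    · exact h.mem (by omega)
    · exact h.mem (by omega)
  · rcases h.eq_or_eq_of_fst_eq hN hZ.1.1 hpat hi2 (by omega) he hie.symm with rfl | rfl
    · exact h.mem hi
    · exact h.mem (by omega)

lemma fst_last_eq_fst_first (hZ : N.IsMaxZigzag Z) (hN : N.IsRBPN X)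
    (hτ : N.IsSupportTree X τ) (h : IsZigzagSeq Z m a) (hpat : IsNPattern m a)
    (hm : m % 2 = 0) : (a (m - 1)).1 = (a 0).1 := by
  by_contra hopen
  have hout : ∀ v ∈ Z.image Prod.fst, ∃ e ∈ Z, e ∈ τ.arcs ∧ e.1 = v := by
    intro v hv
    obtain ⟨f, hf, rfl⟩ := mem_image.1 hv
    obtain ⟨e, heτ, hef⟩ := hτ.exists_arc_fst_eq hN (hZ.1.1 hf)
    exact ⟨e, hZ.mem_of_fst_mem hN h hpat (hτ.2.1 heτ) (hef ▸ mem_image_of_mem _ hf),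
      heτ, hef⟩
  have := card_image_fst_le_card_image_snd hτ.indeg_le_one hout
  have := h.card_image_snd_le hpat hm
  have := h.le_card_image_fst hN hZ.1.1 hpat hm hopen
  omega

end IsMaxZigzag

end Dgraph

/-- In a tree-based rooted binary phylogenetic `X`-network, every
maximal zig-zag trail is a crown, an M-fence (a fence with an even number of arcs,
writable as `v₀ < v₁ > ⋯ < v_{m-1} > v_m`), or an N-fence (a fence with an odd
number of arcs, writable as `v₀ > v₁ < ⋯ < v_{m-1} > v_m`). -/
theorem stmt3 {V : Type*} [DecidableEq V] (N : Dgraph V) (X : Finset V)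
    (hN : Dgraph.IsRBPN N X) (hTB : Dgraph.IsTreeBased N X)
    (Z : Finset (V × V)) (hZ : Dgraph.IsMaxZigzag N Z) :
    Dgraph.CrownForm Z ∨
    (¬ Dgraph.CrownForm Z ∧ Z.card % 2 = 0 ∧ Dgraph.MFenceForm Z) ∨
    (¬ Dgraph.CrownForm Z ∧ Z.card % 2 = 1 ∧ Dgraph.NFenceForm Z) := by
  by_cases hC : Dgraph.CrownForm Z
  · exact Or.inl hC
  obtain ⟨m, a, hm₀, ha⟩ := hZ.1.exists_isZigzagSeq
  have hcard : Z.card = m := ha.card_eq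
  rcases ha.isMPattern_or_isNPattern hN hZ.1.1 with hpat | hpat <;>
    rcases Nat.mod_two_eq_zero_or_one m with hm | hm
  · exact Or.inr (Or.inl ⟨hC, hcard ▸ hm, ha.mFenceForm hpat hm⟩)
  · exact Or.inr (Or.inr ⟨hC, hcard ▸ hm, ha.reverse.nFenceForm (hpat.reverse hm) hm⟩)
  · obtain ⟨τ, hτ⟩ := hTB
    exact absurd (ha.crownForm hm₀ hpat hm (hZ.fst_last_eq_fst_first hN hτ ha hpat hm)) hC
  · exact Or.inr (Or.inr ⟨hC, hcard ▸ hm, ha.nFenceForm hpat hm⟩)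
end

section
/- Let Z = ⟨a_1,…,a_{2m}⟩ be a crown with 2m ≥ 4 arcs, listed in zig-zag (cyclically alternating) order. Then Z has exactly two admissible arc-sets, namely {a_2, a_4, …, a_{2m}} and {a_1, a_3, …, a_{2m−1}} (in 0/1-vector notation, ((01)^m) and ((10)^m)). -/
/-- Let `Z = ⟨a₁, …, a_{2m}⟩` be a crown with `2m ≥ 4` arcs, written
cyclically as `v₀ < v₁ > v₂ < ⋯ < v_{2m-1} > v_{2m} = v₀` with distinct vertices
`v₀, …, v_{2m-1}` (so `a_k = mArc v k`).  Then `Z` has exactly two admissible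
arc-sets, namely `{a₂, a₄, …, a_{2m}}` and `{a₁, a₃, …, a_{2m-1}}`. -/
theorem stmt5 {V : Type*} [DecidableEq V] (m : ℕ) (hm : 2 ≤ m) (v : ℕ → V)
    (hcyc : v (2 * m) = v 0) (hinj : Set.InjOn v (Set.Ico 0 (2 * m))) :
    ∀ S : Finset (V × V),
      Dgraph.IsAdmissible (Dgraph.ofArcs ((Finset.Icc 1 (2 * m)).image (Dgraph.mArc v))) S ↔
        (S = (Finset.Icc 1 m).image (fun i => Dgraph.mArc v (2 * i)) ∨
         S = (Finset.Icc 1 m).image (fun i => Dgraph.mArc v (2 * i - 1))) := by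
  intro S
  have hn4 : 4 ≤ 2 * m := by omega
  set n := 2 * m with hn
  set Z : Finset (V × V) := (Finset.Icc 1 n).image (Dgraph.mArc v) with hZ
  set G := Dgraph.ofArcs Z with hG
  set E : Finset (V × V) := (Finset.Icc 1 m).image (fun i => Dgraph.mArc v (2 * i)) with hE
  set O : Finset (V × V) := (Finset.Icc 1 m).image (fun i => Dgraph.mArc v (2 * i - 1)) with hO
  have hGarcs : G.arcs = Z := rfl
  -- injectivity of v up to the cyclic identification
  have vinj : ∀ k l : ℕ, k ≤ n → l ≤ n → v k = v l →
      k = l ∨ (k = 0 ∧ l = n) ∨ (k = n ∧ l = 0) := by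
    intro k l hk hl h
    have hmem : ∀ j, j < n → j ∈ Set.Ico 0 n := fun j hj =>
      Set.mem_Ico.mpr ⟨Nat.zero_le _, hj⟩
    rcases Nat.lt_or_ge k n with hk' | hk'
    · rcases Nat.lt_or_ge l n with hl' | hl'
      · exact Or.inl (hinj (hmem k hk') (hmem l hl') h)
      · have hl0 : l = n := le_antisymm hl hl'
        subst hl0
        rw [hcyc] at h
        have := hinj (hmem k hk') (hmem 0 (by omega)) h
        omega
    · have hk0 : k = n := le_antisymm hk hk'
      subst hk0
      rcases Nat.lt_or_ge l n with hl' | hl'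
      · rw [hcyc] at h
        have := hinj (hmem 0 (by omega)) (hmem l hl') h
        omega
      · left; omega
  have marc_odd : ∀ k, k % 2 = 1 → Dgraph.mArc v k = (v k, v (k - 1)) := by
    intro k h; simp [Dgraph.mArc, h]
  have marc_even : ∀ k, k % 2 = 0 → Dgraph.mArc v k = (v (k - 1), v k) := by
    intro k h; simp [Dgraph.mArc, h]
  have marc_inj : ∀ k l, 1 ≤ k → k ≤ n → 1 ≤ l → l ≤ n →
      Dgraph.mArc v k = Dgraph.mArc v l → k = l := by
    intro k l hk1 hk2 hl1 hl2 h
    rcases Nat.mod_two_eq_zero_or_one k with hk | hk <;>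
      rcases Nat.mod_two_eq_zero_or_one l with hl | hl
    · rw [marc_even k hk, marc_even l hl, Prod.mk.injEq] at h
      rcases vinj _ _ (by omega) (by omega) h.2 with h' | h' | h' <;> omega
    · rw [marc_even k hk, marc_odd l hl, Prod.mk.injEq] at h
      rcases vinj _ _ (by omega) (by omega) h.1 with h1 | h1 | h1 <;>
        rcases vinj _ _ (by omega) (by omega) h.2 with h2 | h2 | h2 <;> omega
    · rw [marc_odd k hk, marc_even l hl, Prod.mk.injEq] at h
      rcases vinj _ _ (by omega) (by omega) h.1 with h1 | h1 | h1 <;>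
        rcases vinj _ _ (by omega) (by omega) h.2 with h2 | h2 | h2 <;> omega
    · rw [marc_odd k hk, marc_odd l hl, Prod.mk.injEq] at h
      rcases vinj _ _ (by omega) (by omega) h.1 with h' | h' | h' <;> omega
  have mem_Z : ∀ a : V × V, a ∈ Z ↔ ∃ k, 1 ≤ k ∧ k ≤ n ∧ a = Dgraph.mArc v k := by
    intro a
    rw [hZ]
    constructor
    · intro ha
      obtain ⟨k, hk, rfl⟩ := Finset.mem_image.mp ha
      exact ⟨k, (Finset.mem_Icc.mp hk).1, (Finset.mem_Icc.mp hk).2, rfl⟩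
    · rintro ⟨k, h1, h2, rfl⟩
      exact Finset.mem_image_of_mem _ (Finset.mem_Icc.mpr ⟨h1, h2⟩)
  have memE : ∀ k, 1 ≤ k → k ≤ n → (Dgraph.mArc v k ∈ E ↔ k % 2 = 0) := by
    intro k h1 h2
    rw [hE]
    constructor
    · intro h
      obtain ⟨i, hi, heq⟩ := Finset.mem_image.mp h
      rw [Finset.mem_Icc] at hi
      have := marc_inj _ _ (by omega) (by omega) h1 h2 heq
      omega
    · intro h
      refine Finset.mem_image.mpr ⟨k / 2, Finset.mem_Icc.mpr ⟨by omega, by omega⟩, ?_⟩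
      show Dgraph.mArc v (2 * (k / 2)) = Dgraph.mArc v k
      congr 1
      omega
  have memO : ∀ k, 1 ≤ k → k ≤ n → (Dgraph.mArc v k ∈ O ↔ k % 2 = 1) := by
    intro k h1 h2
    rw [hO]
    constructor
    · intro h
      obtain ⟨i, hi, heq⟩ := Finset.mem_image.mp h
      rw [Finset.mem_Icc] at hi
      have := marc_inj _ _ (by omega) (by omega) h1 h2 heq
      omega
    · intro h
      refine Finset.mem_image.mpr ⟨(k + 1) / 2, Finset.mem_Icc.mpr ⟨by omega, by omega⟩, ?_⟩
      show Dgraph.mArc v (2 * ((k + 1) / 2) - 1) = Dgraph.mArc v k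
      congr 1
      omega
  have memZk : ∀ k, 1 ≤ k → k ≤ n → Dgraph.mArc v k ∈ Z := fun k h1 h2 =>
    (mem_Z _).mpr ⟨k, h1, h2, rfl⟩
  have hEZ : E ⊆ Z := by
    intro a ha
    rw [hE] at ha
    obtain ⟨i, hi, rfl⟩ := Finset.mem_image.mp ha
    rw [Finset.mem_Icc] at hi
    exact memZk (2 * i) (by omega) (by omega)
  have hOZ : O ⊆ Z := by
    intro a ha
    rw [hO] at ha
    obtain ⟨i, hi, rfl⟩ := Finset.mem_image.mp ha
    rw [Finset.mem_Icc] at hi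
    exact memZk (2 * i - 1) (by omega) (by omega)
  -- classification of pairs of arcs sharing a head
  have head_eq : ∀ k l, 1 ≤ k → k ≤ n → 1 ≤ l → l ≤ n → k ≠ l →
      (Dgraph.mArc v k).2 = (Dgraph.mArc v l).2 →
      (k % 2 = 0 ∧ l = k + 1) ∨ (l % 2 = 0 ∧ k = l + 1) ∨
      (k = 1 ∧ l = n) ∨ (k = n ∧ l = 1) := by
    intro k l hk1 hk2 hl1 hl2 hne h
    rcases Nat.mod_two_eq_zero_or_one k with hk | hk <;>
      rcases Nat.mod_two_eq_zero_or_one l with hl | hl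
    · rw [marc_even k hk, marc_even l hl] at h
      rcases vinj _ _ hk2 hl2 h with h' | h' | h' <;> omega
    · rw [marc_even k hk, marc_odd l hl] at h
      rcases vinj _ _ (by omega) (by omega) h with h' | h' | h' <;> omega
    · rw [marc_odd k hk, marc_even l hl] at h
      rcases vinj _ _ (by omega) (by omega) h with h' | h' | h' <;> omega
    · rw [marc_odd k hk, marc_odd l hl] at h
      rcases vinj _ _ (by omega) (by omega) h with h' | h' | h' <;> omega
  -- classification of pairs of arcs sharing a tail
  have tail_eq : ∀ k l, 1 ≤ k → k ≤ n → 1 ≤ l → l ≤ n → k ≠ l →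
      (Dgraph.mArc v k).1 = (Dgraph.mArc v l).1 →
      (k % 2 = 1 ∧ l = k + 1) ∨ (l % 2 = 1 ∧ k = l + 1) := by
    intro k l hk1 hk2 hl1 hl2 hne h
    rcases Nat.mod_two_eq_zero_or_one k with hk | hk <;>
      rcases Nat.mod_two_eq_zero_or_one l with hl | hl
    · rw [marc_even k hk, marc_even l hl] at h
      rcases vinj _ _ (by omega) (by omega) h with h' | h' | h' <;> omega
    · rw [marc_even k hk, marc_odd l hl] at h
      rcases vinj _ _ (by omega) (by omega) h with h' | h' | h' <;> omega
    · rw [marc_odd k hk, marc_even l hl] at h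
      rcases vinj _ _ (by omega) (by omega) h with h' | h' | h' <;> omega
    · rw [marc_odd k hk, marc_odd l hl] at h
      rcases vinj _ _ (by omega) (by omega) h with h' | h' | h' <;> omega
  -- every head is shared by two arcs
  have head_partner : ∀ k, 1 ≤ k → k ≤ n → ∃ k', 1 ≤ k' ∧ k' ≤ n ∧ k' ≠ k ∧
      (Dgraph.mArc v k').2 = (Dgraph.mArc v k).2 := by
    intro k hk1 hk2
    rcases Nat.mod_two_eq_zero_or_one k with hk | hk
    · rcases eq_or_lt_of_le hk2 with h | h
      · refine ⟨1, le_rfl, by omega, by omega, ?_⟩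
        rw [marc_odd 1 (by norm_num), marc_even k hk]
        show v 0 = v k
        rw [h, hcyc]
      · refine ⟨k + 1, by omega, by omega, by omega, ?_⟩
        rw [marc_odd (k + 1) (by omega), marc_even k hk]
        show v (k + 1 - 1) = v k
        rw [Nat.add_sub_cancel]
    · rcases eq_or_lt_of_le hk1 with h | h
      · refine ⟨n, by omega, le_rfl, by omega, ?_⟩
        rw [marc_even n (by omega), marc_odd k hk]
        show v n = v (k - 1)
        rw [← h, hcyc]
      · refine ⟨k - 1, by omega, by omega, by omega, ?_⟩
        rw [marc_even (k - 1) (by omega), marc_odd k hk]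
  -- every tail is shared by two arcs
  have tail_partner : ∀ k, 1 ≤ k → k ≤ n → ∃ k', 1 ≤ k' ∧ k' ≤ n ∧ k' ≠ k ∧
      (Dgraph.mArc v k').1 = (Dgraph.mArc v k).1 := by
    intro k hk1 hk2
    rcases Nat.mod_two_eq_zero_or_one k with hk | hk
    · refine ⟨k - 1, by omega, by omega, by omega, ?_⟩
      rw [marc_odd (k - 1) (by omega), marc_even k hk]
    · refine ⟨k + 1, by omega, by omega, by omega, ?_⟩
      rw [marc_even (k + 1) (by omega), marc_odd k hk]
      show v (k + 1 - 1) = v k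
      rw [Nat.add_sub_cancel]
  have indeg_two : ∀ a ∈ Z, 2 ≤ G.indeg a.2 := by
    intro a ha
    obtain ⟨k, hk1, hk2, rfl⟩ := (mem_Z a).mp ha
    obtain ⟨k', h1, h2, hne, hhd⟩ := head_partner k hk1 hk2
    have hZ' : Dgraph.mArc v k' ∈ Z := memZk k' h1 h2
    have hne' : Dgraph.mArc v k' ≠ Dgraph.mArc v k := fun h =>
      hne (marc_inj _ _ h1 h2 hk1 hk2 h)
    have hm1 : Dgraph.mArc v k ∈ G.arcs.filter (fun b => b.2 = (Dgraph.mArc v k).2) := by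
      rw [hGarcs]; exact Finset.mem_filter.mpr ⟨ha, rfl⟩
    have hm2 : Dgraph.mArc v k' ∈ G.arcs.filter (fun b => b.2 = (Dgraph.mArc v k).2) := by
      rw [hGarcs]; exact Finset.mem_filter.mpr ⟨hZ', hhd⟩
    exact Finset.one_lt_card.mpr ⟨_, hm2, _, hm1, hne'⟩
  have outdeg_two : ∀ a ∈ Z, 2 ≤ G.outdeg a.1 := by
    intro a ha
    obtain ⟨k, hk1, hk2, rfl⟩ := (mem_Z a).mp ha
    obtain ⟨k', h1, h2, hne, htl⟩ := tail_partner k hk1 hk2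
    have hZ' : Dgraph.mArc v k' ∈ Z := memZk k' h1 h2
    have hne' : Dgraph.mArc v k' ≠ Dgraph.mArc v k := fun h =>
      hne (marc_inj _ _ h1 h2 hk1 hk2 h)
    have hm1 : Dgraph.mArc v k ∈ G.arcs.filter (fun b => b.1 = (Dgraph.mArc v k).1) := by
      rw [hGarcs]; exact Finset.mem_filter.mpr ⟨ha, rfl⟩
    have hm2 : Dgraph.mArc v k' ∈ G.arcs.filter (fun b => b.1 = (Dgraph.mArc v k).1) := by
      rw [hGarcs]; exact Finset.mem_filter.mpr ⟨hZ', htl⟩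
    exact Finset.one_lt_card.mpr ⟨_, hm2, _, hm1, hne'⟩
  -- both candidate sets are admissible
  have admE : Dgraph.IsAdmissible G E := by
    refine ⟨by rw [hGarcs]; exact hEZ, ?_, ?_, ?_⟩
    · intro a ha h
      rw [hGarcs] at ha
      exfalso
      rcases h with h | h
      · have := indeg_two a ha; omega
      · have := outdeg_two a ha; omega
    · intro a₁ ha₁ a₂ ha₂ hne hhd
      rw [hGarcs] at ha₁ ha₂
      obtain ⟨k, hk1, hk2, rfl⟩ := (mem_Z a₁).mp ha₁
      obtain ⟨l, hl1, hl2, rfl⟩ := (mem_Z a₂).mp ha₂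
      have hkl : k ≠ l := fun h => hne (by rw [h])
      rcases head_eq k l hk1 hk2 hl1 hl2 hkl hhd with ⟨h1, h2⟩ | ⟨h1, h2⟩ | ⟨h1, h2⟩ | ⟨h1, h2⟩
      · exact Or.inl ⟨(memE k hk1 hk2).mpr h1,
          fun hc => by have := (memE l hl1 hl2).mp hc; omega⟩
      · exact Or.inr ⟨fun hc => by have := (memE k hk1 hk2).mp hc; omega,
          (memE l hl1 hl2).mpr h1⟩
      · exact Or.inr ⟨fun hc => by have := (memE k hk1 hk2).mp hc; omega,
          (memE l hl1 hl2).mpr (by omega)⟩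
      · exact Or.inl ⟨(memE k hk1 hk2).mpr (by omega),
          fun hc => by have := (memE l hl1 hl2).mp hc; omega⟩
    · intro a₁ ha₁ a₂ ha₂ hne htl
      rw [hGarcs] at ha₁ ha₂
      obtain ⟨k, hk1, hk2, rfl⟩ := (mem_Z a₁).mp ha₁
      obtain ⟨l, hl1, hl2, rfl⟩ := (mem_Z a₂).mp ha₂
      have hkl : k ≠ l := fun h => hne (by rw [h])
      rcases tail_eq k l hk1 hk2 hl1 hl2 hkl htl with ⟨h1, h2⟩ | ⟨h1, h2⟩
      · exact Or.inr ((memE l hl1 hl2).mpr (by omega))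
      · exact Or.inl ((memE k hk1 hk2).mpr (by omega))
  have admO : Dgraph.IsAdmissible G O := by
    refine ⟨by rw [hGarcs]; exact hOZ, ?_, ?_, ?_⟩
    · intro a ha h
      rw [hGarcs] at ha
      exfalso
      rcases h with h | h
      · have := indeg_two a ha; omega
      · have := outdeg_two a ha; omega
    · intro a₁ ha₁ a₂ ha₂ hne hhd
      rw [hGarcs] at ha₁ ha₂
      obtain ⟨k, hk1, hk2, rfl⟩ := (mem_Z a₁).mp ha₁
      obtain ⟨l, hl1, hl2, rfl⟩ := (mem_Z a₂).mp ha₂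
      have hkl : k ≠ l := fun h => hne (by rw [h])
      rcases head_eq k l hk1 hk2 hl1 hl2 hkl hhd with ⟨h1, h2⟩ | ⟨h1, h2⟩ | ⟨h1, h2⟩ | ⟨h1, h2⟩
      · exact Or.inr ⟨fun hc => by have := (memO k hk1 hk2).mp hc; omega,
          (memO l hl1 hl2).mpr (by omega)⟩
      · exact Or.inl ⟨(memO k hk1 hk2).mpr (by omega),
          fun hc => by have := (memO l hl1 hl2).mp hc; omega⟩
      · exact Or.inl ⟨(memO k hk1 hk2).mpr (by omega),
          fun hc => by have := (memO l hl1 hl2).mp hc; omega⟩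
      · exact Or.inr ⟨fun hc => by have := (memO k hk1 hk2).mp hc; omega,
          (memO l hl1 hl2).mpr (by omega)⟩
    · intro a₁ ha₁ a₂ ha₂ hne htl
      rw [hGarcs] at ha₁ ha₂
      obtain ⟨k, hk1, hk2, rfl⟩ := (mem_Z a₁).mp ha₁
      obtain ⟨l, hl1, hl2, rfl⟩ := (mem_Z a₂).mp ha₂
      have hkl : k ≠ l := fun h => hne (by rw [h])
      rcases tail_eq k l hk1 hk2 hl1 hl2 hkl htl with ⟨h1, h2⟩ | ⟨h1, h2⟩
      · exact Or.inl ((memO k hk1 hk2).mpr (by omega))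
      · exact Or.inr ((memO l hl1 hl2).mpr (by omega))
  constructor
  · intro hS
    obtain ⟨hS1, hS2, hS3, hS4⟩ := hS
    rw [hGarcs] at hS1
    -- exactly one of a_{2i}, a_{2i+1} is in S (shared head), 1 ≤ i < m
    have hx : ∀ i, 1 ≤ i → i < m →
        ((Dgraph.mArc v (2 * i) ∈ S ∧ Dgraph.mArc v (2 * i + 1) ∉ S) ∨
         (Dgraph.mArc v (2 * i) ∉ S ∧ Dgraph.mArc v (2 * i + 1) ∈ S)) := by
      intro i h1 h2
      refine hS3 _ (by rw [hGarcs]; exact memZk _ (by omega) (by omega))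
        _ (by rw [hGarcs]; exact memZk _ (by omega) (by omega)) ?_ ?_
      · intro h
        have := marc_inj (2 * i) (2 * i + 1) (by omega) (by omega) (by omega) (by omega) h
        omega
      · rw [marc_even (2 * i) (by omega), marc_odd (2 * i + 1) (by omega)]
        show v (2 * i) = v (2 * i + 1 - 1)
        congr 1
    -- exactly one of a_{2m}, a_1 is in S (shared head v_0)
    have hx0 : (Dgraph.mArc v n ∈ S ∧ Dgraph.mArc v 1 ∉ S) ∨
        (Dgraph.mArc v n ∉ S ∧ Dgraph.mArc v 1 ∈ S) := by
      refine hS3 _ (by rw [hGarcs]; exact memZk _ (by omega) (by omega))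
        _ (by rw [hGarcs]; exact memZk _ (by omega) (by omega)) ?_ ?_
      · intro h
        have := marc_inj n 1 (by omega) (by omega) (by omega) (by omega) h
        omega
      · rw [marc_even n (by omega), marc_odd 1 (by norm_num)]
        show v n = v 0
        exact hcyc
    -- at least one of a_{2i-1}, a_{2i} is in S (shared tail), 1 ≤ i ≤ m
    have ht : ∀ i, 1 ≤ i → i ≤ m →
        (Dgraph.mArc v (2 * i - 1) ∈ S ∨ Dgraph.mArc v (2 * i) ∈ S) := by
      intro i h1 h2
      refine hS4 _ (by rw [hGarcs]; exact memZk _ (by omega) (by omega))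
        _ (by rw [hGarcs]; exact memZk _ (by omega) (by omega)) ?_ ?_
      · intro h
        have := marc_inj (2 * i - 1) (2 * i) (by omega) (by omega) (by omega) (by omega) h
        omega
      · rw [marc_odd (2 * i - 1) (by omega), marc_even (2 * i) (by omega)]
    have step : ∀ i, 1 ≤ i → i < m →
        Dgraph.mArc v (2 * i) ∈ S → Dgraph.mArc v (2 * (i + 1)) ∈ S := by
      intro i h1 h2 hp
      rcases hx i h1 h2 with ⟨_, hq⟩ | ⟨hnp, _⟩
      · rcases ht (i + 1) (by omega) (by omega) with h | h
        · exfalso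
          apply hq
          have heq : 2 * (i + 1) - 1 = 2 * i + 1 := by omega
          rwa [heq] at h
        · exact h
      · exact absurd hp hnp
    have cyc : Dgraph.mArc v n ∈ S → Dgraph.mArc v 2 ∈ S := by
      intro hp
      rcases hx0 with ⟨_, hq⟩ | ⟨hnp, _⟩
      · rcases ht 1 le_rfl (by omega) with h | h
        · exfalso
          apply hq
          have heq : 2 * 1 - 1 = 1 := by omega
          rwa [heq] at h
        · have heq : 2 * 1 = 2 := by omega
          rwa [heq] at h
      · exact absurd hp hnp
    have up : ∀ j i, 1 ≤ i → i + j ≤ m →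
        Dgraph.mArc v (2 * i) ∈ S → Dgraph.mArc v (2 * (i + j)) ∈ S := by
      intro j
      induction j with
      | zero => intro i _ _ h; simpa using h
      | succ j ih =>
        intro i h1 h2 h
        have h' := step i h1 (by omega) h
        have h'' := ih (i + 1) (by omega) (by omega) h'
        have heq : 2 * (i + (j + 1)) = 2 * (i + 1 + j) := by ring
        rw [heq]
        exact h''
    by_cases hP1 : Dgraph.mArc v 2 ∈ S
    · -- S = E
      have allP : ∀ i, 1 ≤ i → i ≤ m → Dgraph.mArc v (2 * i) ∈ S := by
        intro i h1 h2
        have h21 : Dgraph.mArc v (2 * 1) ∈ S := by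
          have : (2 : ℕ) * 1 = 2 := by norm_num
          rw [this]; exact hP1
        have := up (i - 1) 1 le_rfl (by omega) h21
        have heq : 2 * (1 + (i - 1)) = 2 * i := by omega
        rwa [heq] at this
      have hPm : Dgraph.mArc v n ∈ S := by
        have := allP m (by omega) le_rfl
        rwa [← hn] at this
      have allnQ : ∀ i, 1 ≤ i → i ≤ m → Dgraph.mArc v (2 * i - 1) ∉ S := by
        intro i h1 h2
        rcases eq_or_lt_of_le h1 with h | h
        · rcases hx0 with ⟨_, hq⟩ | ⟨hnp, _⟩
          · have heq : 2 * i - 1 = 1 := by omega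
            rwa [heq]
          · exact absurd hPm hnp
        · rcases hx (i - 1) (by omega) (by omega) with ⟨_, hq⟩ | ⟨hnp, _⟩
          · have heq : 2 * i - 1 = 2 * (i - 1) + 1 := by omega
            rwa [heq]
          · exact absurd (allP (i - 1) (by omega) (by omega)) hnp
      left
      apply Finset.ext
      intro a
      constructor
      · intro haS
        have haZ := hS1 haS
        obtain ⟨k, hk1, hk2, rfl⟩ := (mem_Z a).mp haZ
        rcases Nat.mod_two_eq_zero_or_one k with hk | hk
        · exact (memE k hk1 hk2).mpr hk
        · exfalso
          have hq := allnQ ((k + 1) / 2) (by omega) (by omega)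
          have heq : 2 * ((k + 1) / 2) - 1 = k := by omega
          rw [heq] at hq
          exact hq haS
      · intro haE
        rw [hE] at haE
        obtain ⟨i, hi, rfl⟩ := Finset.mem_image.mp haE
        rw [Finset.mem_Icc] at hi
        exact allP i hi.1 hi.2
    · -- S = O
      have allnP : ∀ i, 1 ≤ i → i ≤ m → Dgraph.mArc v (2 * i) ∉ S := by
        intro i h1 h2 hp
        have hm' := up (m - i) i h1 (by omega) hp
        have heq : 2 * (i + (m - i)) = n := by omega
        rw [heq] at hm'
        exact hP1 (cyc hm')
      have allQ : ∀ i, 1 ≤ i → i ≤ m → Dgraph.mArc v (2 * i - 1) ∈ S := by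
        intro i h1 h2
        rcases ht i h1 h2 with h | h
        · exact h
        · exact absurd h (allnP i h1 h2)
      right
      apply Finset.ext
      intro a
      constructor
      · intro haS
        have haZ := hS1 haS
        obtain ⟨k, hk1, hk2, rfl⟩ := (mem_Z a).mp haZ
        rcases Nat.mod_two_eq_zero_or_one k with hk | hk
        · exfalso
          have hq := allnP (k / 2) (by omega) (by omega)
          have heq : 2 * (k / 2) = k := by omega
          rw [heq] at hq
          exact hq haS
        · exact (memO k hk1 hk2).mpr hk
      · intro haO
        rw [hO] at haO
        obtain ⟨i, hi, rfl⟩ := Finset.mem_image.mp haO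
        rw [Finset.mem_Icc] at hi
        exact allQ i hi.1 hi.2
  · rintro (rfl | rfl)
    · exact admE
    · exact admO
end
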